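/- arXiv:2408.13494 — 11 statements merged into one kernel-verified Lean document; each statement's English description precedes it below -/
import Mathlib

section
/- For any graph G with general position number gp(G) and order n, ⌈n / gp(G)⌉ ≤ χ_gp(G) ≤ ⌈(n − gp(G) + 2)/2⌉. -/
open SimpleGraph

/-- A set `S` is in general position: no shortest path contains more than two vertices of `S`. -/
def IsGenPosSet {V : Type*} (G : SimpleGraph V) (S : Set V) : Prop :=
  ∀ ⦃u v : V⦄ (p : G.Walk u v), p.IsPath → p.length = G.dist u v →
    ∀ x y z, x ∈ S → y ∈ S → z ∈ S →
      x ∈ p.support → y ∈ p.support → z ∈ p.support →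
      x = y ∨ y = z ∨ x = z

/-- `G` can be coloured with `k` colours so that every colour class is in general position. -/
def GpColorable {V : Type*} (G : SimpleGraph V) (k : ℕ) : Prop :=
  ∃ c : V → Fin k, ∀ i, IsGenPosSet G {v | c v = i}

/-- The gp-chromatic number: least number of colours in a colouring whose classes are
general position sets. -/
noncomputable def gpChromatic {V : Type*} (G : SimpleGraph V) : ℕ :=
  sInf {k | GpColorable G k}

/-- The general position number of `G`: largest size of a general position set. -/
noncomputable def gpNumber {V : Type*} (G : SimpleGraph V) : ℕ :=
  sSup {k | ∃ S : Set V, IsGenPosSet G S ∧ S.ncard = k}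

lemma isGenPosSet_of_small {V : Type*} (G : SimpleGraph V) (S : Set V)
    (h : ∀ x ∈ S, ∀ y ∈ S, ∀ z ∈ S, x = y ∨ y = z ∨ x = z) : IsGenPosSet G S :=
  fun _ _ _ _ _ x y z hx hy hz _ _ _ => h x hx y hy z hz

lemma isGenPosSet_mono {V : Type*} {G : SimpleGraph V} {S T : Set V}
    (hST : S ⊆ T) (hT : IsGenPosSet G T) : IsGenPosSet G S :=
  fun _ _ p hp hl x y z hx hy hz => hT p hp hl x y z (hST hx) (hST hy) (hST hz)

/-- `⌈n / gp(G)⌉ ≤ χ_gp(G) ≤ ⌈(n − gp(G) + 2)/2⌉` for any graph `G` of order `n`. -/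
theorem gpChromatic_bounds {V : Type*} [Fintype V] (G : SimpleGraph V) :
    (Fintype.card V + gpNumber G - 1) / gpNumber G ≤ gpChromatic G ∧
      gpChromatic G ≤ (Fintype.card V - gpNumber G + 2 + 1) / 2 := by
  classical
  set n := Fintype.card V with hn
  set A : Set ℕ := {k | ∃ S : Set V, IsGenPosSet G S ∧ S.ncard = k} with hA
  have hA_ne : A.Nonempty :=
    ⟨0, ∅, isGenPosSet_of_small G ∅ (by simp), by simp⟩
  have hub : ∀ k ∈ A, k ≤ n := by
    rintro k ⟨S, -, hS⟩
    calc k = S.ncard := hS.symm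
      _ ≤ (Set.univ : Set V).ncard :=
          Set.ncard_le_ncard (Set.subset_univ S) Set.finite_univ
      _ = n := by rw [Set.ncard_univ, Nat.card_eq_fintype_card]
  have hA_bdd : BddAbove A := ⟨n, hub⟩
  set g := gpNumber G with hg
  have hg_mem : g ∈ A := Nat.sSup_mem hA_ne hA_bdd
  have hg_le : g ≤ n := hub g hg_mem
  obtain ⟨S, hSgp, hScard⟩ := hg_mem
  -- build the colouring for the upper bound
  set k : ℕ := (n - g + 2 + 1) / 2 with hk
  have hk0 : 0 < k := by omega
  set m : ℕ := Nat.card ↥(Sᶜ) with hm'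
  have hm : m = n - g := by
    have h1 : S.ncard + Sᶜ.ncard = Nat.card V := Set.ncard_add_ncard_compl S
    have h2 : Nat.card V = n := by rw [Nat.card_eq_fintype_card]
    have h3 : m = Sᶜ.ncard := Nat.card_coe_set_eq _
    omega
  set e : ↥(Sᶜ) ≃ Fin m := Finite.equivFin ↥(Sᶜ) with he
  have hbound : ∀ (v : V) (h : v ∉ S), 1 + (e ⟨v, h⟩).val / 2 < k := by
    intro v h
    have hj := (e ⟨v, h⟩).isLt
    omega
  set c : V → Fin k := fun v =>
    if h : v ∈ S then ⟨0, hk0⟩ else ⟨1 + (e ⟨v, h⟩).val / 2, hbound v h⟩ with hc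
  have hcval : ∀ (v : V) (h : v ∉ S), (c v).val = 1 + (e ⟨v, h⟩).val / 2 := by
    intro v h; simp only [hc, dif_neg h]
  have hcol : GpColorable G k := by
    refine ⟨c, fun i => ?_⟩
    by_cases hi : i = ⟨0, hk0⟩
    · refine isGenPosSet_mono ?_ hSgp
      intro v hv
      by_contra hvS
      have h1 : c v = i := hv
      have h2 := congrArg Fin.val h1
      rw [hcval v hvS, hi] at h2
      simp at h2
    · refine isGenPosSet_of_small G _ ?_
      have key : ∀ w ∈ {v | c v = i}, ∃ hw : w ∉ S,
          1 + (e ⟨w, hw⟩).val / 2 = i.val := by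
        intro w hw
        have h1 : c w = i := hw
        by_cases hwS : w ∈ S
        · exfalso; apply hi
          rw [← h1]
          simp only [hc, dif_pos hwS]
        · exact ⟨hwS, by rw [← hcval w hwS, h1]⟩
      intro x hx y hy z hz
      obtain ⟨hxS, hxv⟩ := key x hx
      obtain ⟨hyS, hyv⟩ := key y hy
      obtain ⟨hzS, hzv⟩ := key z hz
      have htri : (e ⟨x, hxS⟩).val = (e ⟨y, hyS⟩).val ∨
          (e ⟨y, hyS⟩).val = (e ⟨z, hzS⟩).val ∨
          (e ⟨x, hxS⟩).val = (e ⟨z, hzS⟩).val := by omega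
      rcases htri with h | h | h
      · left
        have := e.injective (Fin.ext h)
        exact congrArg Subtype.val this
      · right; left
        have := e.injective (Fin.ext h)
        exact congrArg Subtype.val this
      · right; right
        have := e.injective (Fin.ext h)
        exact congrArg Subtype.val this
  have hupper : gpChromatic G ≤ k := Nat.sInf_le hcol
  constructor
  · -- lower bound
    by_cases hg0 : g = 0
    · simp [hg0]
    · have hB_ne : {k | GpColorable G k}.Nonempty := ⟨k, hcol⟩
      set k₀ := gpChromatic G with hk₀
      have hχ : GpColorable G k₀ := Nat.sInf_mem hB_ne
      obtain ⟨c', hc'⟩ := hχ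
      have hcard : n ≤ k₀ * g := by
        have h1 : (Finset.univ : Finset V).card =
            ∑ i : Fin k₀, (Finset.univ.filter (fun v => c' v = i)).card :=
          Finset.card_eq_sum_card_fiberwise (fun v _ => Finset.mem_univ (c' v))
        have h2 : ∀ i : Fin k₀, (Finset.univ.filter (fun v => c' v = i)).card ≤ g := by
          intro i
          have hmem : (Finset.univ.filter (fun v => c' v = i)).card ∈ A := by
            refine ⟨{v | c' v = i}, hc' i, ?_⟩
            rw [Set.ncard_eq_toFinset_card']
            congr 1
            ext v
            simp
          exact le_csSup hA_bdd hmem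
        calc n = (Finset.univ : Finset V).card := (Finset.card_univ).symm
          _ = ∑ i : Fin k₀, (Finset.univ.filter (fun v => c' v = i)).card := h1
          _ ≤ ∑ _i : Fin k₀, g := Finset.sum_le_sum (fun i _ => h2 i)
          _ = k₀ * g := by simp [Finset.sum_const, Finset.card_univ, mul_comm]
      have hd1 : (n + g - 1) / g ≤ (k₀ * g + (g - 1)) / g :=
        Nat.div_le_div_right (by omega)
      have hd2 : (k₀ * g + (g - 1)) / g = k₀ + (g - 1) / g := by
        rw [mul_comm]; exact Nat.mul_add_div (by omega) _ _
      have hd3 : (g - 1) / g = 0 := Nat.div_eq_of_lt (by omega)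
      rw [hd2, hd3] at hd1
      simpa using hd1
  · exact hupper
end

section
/- If G is a path of order n ≥ 2 or the cycle C_4, then χ_gp(G) = ⌈n/2⌉. -/
open SimpleGraph

-- helper: finset with no three distinct elements has card ≤ 2
lemma card_le_two_of_no_three {α : Type*} (s : Finset α)
    (h : ∀ x ∈ s, ∀ y ∈ s, ∀ z ∈ s, x = y ∨ y = z ∨ x = z) : s.card ≤ 2 := by
  classical
  by_contra hlt
  push_neg at hlt
  obtain ⟨x, hx⟩ := (Finset.card_pos (s := s)).mp (by omega)
  obtain ⟨y, hy, hyx⟩ := Finset.exists_mem_ne (s := s) (by omega) x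
  have hmem : y ∈ s.erase x := Finset.mem_erase.mpr ⟨hyx, hy⟩
  have h2 : 0 < ((s.erase x).erase y).card := by
    rw [Finset.card_erase_of_mem hmem, Finset.card_erase_of_mem hx]; omega
  obtain ⟨z, hz⟩ := (Finset.card_pos (s := (s.erase x).erase y)).mp h2
  obtain ⟨hzy, hz'⟩ := Finset.mem_erase.mp hz
  obtain ⟨hzx, hzs⟩ := Finset.mem_erase.mp hz'
  rcases h x hx y hy z hzs with h' | h' | h' <;> simp_all

-- distances transfer along isos
lemma iso_dist_le {V W : Type*} {G : SimpleGraph V} {H : SimpleGraph W} (e : G ≃g H)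
    (u v : V) : H.dist (e u) (e v) ≤ G.dist u v := by
  by_cases hr : G.Reachable u v
  · obtain ⟨p, hp⟩ := hr.exists_walk_length_eq_dist
    calc H.dist (e u) (e v) ≤ (p.map e.toHom).length := SimpleGraph.dist_le _
      _ = G.dist u v := by rw [Walk.length_map, hp]
  · have hnr : ¬ H.Reachable (e u) (e v) := by
      rintro ⟨q⟩
      exact hr ⟨(q.map e.symm.toHom).copy (by simp) (by simp)⟩
    simp [SimpleGraph.dist_eq_zero_of_not_reachable hnr]

lemma iso_dist {V W : Type*} {G : SimpleGraph V} {H : SimpleGraph W} (e : G ≃g H)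
    (u v : V) : H.dist (e u) (e v) = G.dist u v := by
  refine le_antisymm (iso_dist_le e u v) ?_
  have := iso_dist_le e.symm (e u) (e v)
  simpa using this

-- upper bound: any graph is gp-colourable with ⌈n/2⌉ colours
lemma gpColorable_half {V : Type*} [Fintype V] (G : SimpleGraph V) :
    GpColorable G ((Fintype.card V + 1) / 2) := by
  classical
  let e := Fintype.equivFin V
  refine ⟨fun v => ⟨(e v : ℕ) / 2, by have := (e v).isLt; omega⟩, ?_⟩
  intro i u v p hp hd x y z hx hy hz _ _ _
  simp only [Set.mem_setOf_eq, Fin.ext_iff] at hx hy hz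
  have hq : ((e x : ℕ)) = (e y : ℕ) ∨ ((e y : ℕ)) = (e z : ℕ) ∨ ((e x : ℕ)) = (e z : ℕ) := by
    omega
  rcases hq with h' | h' | h'
  · exact Or.inl (e.injective (Fin.ext h'))
  · exact Or.inr (Or.inl (e.injective (Fin.ext h')))
  · exact Or.inr (Or.inr (e.injective (Fin.ext h')))

-- walk in pathGraph from k down to 0
def downWalk (n : ℕ) : (k : ℕ) → (h : k < n) →
    (pathGraph n).Walk ⟨k, h⟩ ⟨0, Nat.lt_of_le_of_lt (Nat.zero_le k) h⟩
  | 0, _ => Walk.nil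
  | k+1, h => Walk.cons (by simp [pathGraph_adj]) (downWalk n k (Nat.lt_of_succ_lt h))

lemma downWalk_length (n : ℕ) : ∀ (k : ℕ) (h : k < n), (downWalk n k h).length = k
  | 0, _ => rfl
  | k+1, h => by simp [downWalk, downWalk_length n k]

lemma mem_downWalk_support (n : ℕ) : ∀ (k : ℕ) (h : k < n) (x : Fin n), x.val ≤ k →
    x ∈ (downWalk n k h).support
  | 0, h, x, hx => by
    have hx0 : x.val = 0 := by omega
    have : x = ⟨0, Nat.lt_of_le_of_lt (Nat.zero_le 0) h⟩ := Fin.ext (by simp [hx0])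
    simp [downWalk, this]
  | k+1, h, x, hx => by
    rw [downWalk, Walk.support_cons]
    rcases Nat.lt_or_ge x.val (k+1) with h' | h'
    · exact List.mem_cons_of_mem _ (mem_downWalk_support n k _ x (by omega))
    · have : x = ⟨k+1, h⟩ := Fin.ext (by simpa using (by omega : x.val = k+1))
      simp [this]

lemma downWalk_support_le (n : ℕ) : ∀ (k : ℕ) (h : k < n) (x : Fin n),
    x ∈ (downWalk n k h).support → x.val ≤ k
  | 0, h, x, hx => by
    rw [downWalk] at hx
    simp at hx
    simp [hx]
  | k+1, h, x, hx => by
    rw [downWalk, Walk.support_cons] at hx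
    rcases List.mem_cons.mp hx with h' | h'
    · simp [h']
    · have := downWalk_support_le n k _ x h'
      omega

lemma downWalk_isPath (n : ℕ) : ∀ (k : ℕ) (h : k < n), (downWalk n k h).IsPath
  | 0, _ => by simp [downWalk]
  | k+1, h => by
    rw [downWalk]
    refine (downWalk_isPath n k _).cons ?_
    intro hmem
    have := downWalk_support_le n k _ _ hmem
    simp at this

lemma pathGraph_walk_length {n : ℕ} {u v : Fin n} (p : (pathGraph n).Walk u v) :
    u.val ≤ v.val + p.length ∧ v.val ≤ u.val + p.length := by
  induction p with
  | nil => omega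
  | cons h p ih =>
    rw [pathGraph_adj] at h
    rw [Walk.length_cons]
    omega

lemma pathGraph_dist (n : ℕ) (h2 : 2 ≤ n) :
    (pathGraph n).dist ⟨n-1, by omega⟩ ⟨0, by omega⟩ = n - 1 := by
  refine le_antisymm ?_ ?_
  · have := SimpleGraph.dist_le ((downWalk n (n-1) (by omega)).copy rfl (Fin.ext rfl))
    rwa [Walk.length_copy, downWalk_length] at this
  · obtain ⟨p, hp⟩ := (pathGraph_preconnected n ⟨n-1, by omega⟩ ⟨0, by omega⟩).exists_walk_length_eq_dist
    have := (pathGraph_walk_length p).1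
    simp only [hp] at this
    simpa using this

lemma card_le_of_colouring {V : Type*} [Fintype V] {j : ℕ} (c : V → Fin j)
    (h : ∀ x y z : V, c x = c y → c y = c z → x = y ∨ y = z ∨ x = z) :
    Fintype.card V ≤ 2 * j := by
  classical
  rw [← Finset.card_univ,
    Finset.card_eq_sum_card_fiberwise (f := c) (t := Finset.univ) (fun x _ => Finset.mem_univ _)]
  calc ∑ b : Fin j, (Finset.univ.filter fun a => c a = b).card
      ≤ ∑ _b : Fin j, 2 := by
        refine Finset.sum_le_sum fun b _ => ?_
        refine card_le_two_of_no_three _ fun x hx y hy z hz => ?_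
        simp only [Finset.mem_filter] at hx hy hz
        exact h x y z (hx.2.trans hy.2.symm) (hy.2.trans hz.2.symm)
    _ = 2 * j := by simp [mul_comm]


/-- If `G` is a path of order `n ≥ 2` or the cycle `C₄`, then `χ_gp(G) = ⌈n/2⌉`. -/
theorem gpChromatic_path_or_C4 {V : Type*} [Fintype V] (G : SimpleGraph V)
    (h : (2 ≤ Fintype.card V ∧ Nonempty (G ≃g pathGraph (Fintype.card V))) ∨
      Nonempty (G ≃g cycleGraph 4)) :
    gpChromatic G = (Fintype.card V + 1) / 2 := by
  classical
  have hmem : GpColorable G ((Fintype.card V + 1) / 2) := gpColorable_half G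
  refine le_antisymm (Nat.sInf_le hmem) (le_csInf ⟨_, hmem⟩ ?_)
  rintro j ⟨c, hc⟩
  rcases h with ⟨hn, he⟩ | he
  · -- path case
    obtain ⟨e⟩ := he
    set n := Fintype.card V with hn'
    have hlt : n - 1 < n := by omega
    let a : Fin n := ⟨n - 1, hlt⟩
    let b : Fin n := ⟨0, by omega⟩
    let w := downWalk n (n - 1) hlt
    let q : G.Walk (e.symm a) (e.symm b) := w.map e.symm.toHom
    have hqp : q.IsPath :=
      Walk.map_isPath_of_injective e.symm.injective (downWalk_isPath n (n-1) hlt)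
    have hdist : G.dist (e.symm a) (e.symm b) = n - 1 := by
      rw [iso_dist e.symm a b]
      exact pathGraph_dist n hn
    have hlen : q.length = G.dist (e.symm a) (e.symm b) := by
      rw [hdist]
      simpa [q] using downWalk_length n (n-1) hlt
    have hsupp : ∀ x : V, x ∈ q.support := by
      intro x
      rw [Walk.support_map]
      refine List.mem_map.mpr ⟨e x, ?_, by simp⟩
      exact mem_downWalk_support n (n-1) hlt (e x) (by have := (e x).isLt; omega)
    have hsmall : ∀ x y z : V, c x = c y → c y = c z → x = y ∨ y = z ∨ x = z := by
      intro x y z h1 h2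
      exact hc (c z) q hqp hlen x y z (h1.trans h2) h2 rfl (hsupp x) (hsupp y) (hsupp z)
    have := card_le_of_colouring c hsmall
    omega
  · -- C4 case
    obtain ⟨e⟩ := he
    have hcard : Fintype.card V = 4 := by
      rw [← Fintype.card_fin 4]; exact Fintype.card_congr e.toEquiv
    rw [hcard]
    by_contra hj
    push_neg at hj
    interval_cases j
    · exact (c (e.symm 0)).elim0
    · -- one colour: whole vertex set is a colour class
      have h01 : (cycleGraph 4).Adj 0 1 := by decide
      have h12 : (cycleGraph 4).Adj 1 2 := by decide
      let w : (cycleGraph 4).Walk 0 2 := Walk.cons h01 (Walk.cons h12 Walk.nil)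
      have hwp : w.IsPath := by
        simp [w, Walk.isPath_def, Walk.support_cons]
      let q : G.Walk (e.symm 0) (e.symm 2) := w.map e.symm.toHom
      have hqp : q.IsPath := Walk.map_isPath_of_injective e.symm.injective hwp
      have hd4 : (cycleGraph 4).dist 0 2 = 2 := by
        have hle : (cycleGraph 4).dist 0 2 ≤ 2 := SimpleGraph.dist_le w
        have hr : (cycleGraph 4).Reachable 0 2 :=
          (cycleGraph_connected (n := 3)).preconnected 0 2
        have hpos : 0 < (cycleGraph 4).dist 0 2 :=
          hr.pos_dist_of_ne (by decide)
        have hne1 : (cycleGraph 4).dist 0 2 ≠ 1 := by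
          intro h1
          exact (by decide : ¬ (cycleGraph 4).Adj 0 2)
            (SimpleGraph.dist_eq_one_iff_adj.mp h1)
        omega
      have hdist : G.dist (e.symm 0) (e.symm 2) = 2 := by
        rw [iso_dist e.symm 0 2, hd4]
      have hlen : q.length = G.dist (e.symm 0) (e.symm 2) := by
        simp [q, w, hdist]
      have hsupp : ∀ i : Fin 4, i ∈ w.support → e.symm i ∈ q.support := by
        intro i hi
        rw [Walk.support_map]
        exact List.mem_map.mpr ⟨i, hi, rfl⟩
      have := hc (c (e.symm 0)) q hqp hlen (e.symm 0) (e.symm 1) (e.symm 2)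
        rfl (Subsingleton.elim _ _) (Subsingleton.elim _ _)
        (hsupp 0 (by simp [w])) (hsupp 1 (by simp [w])) (hsupp 2 (by simp [w]))
      rcases this with h' | h' | h' <;>
        exact absurd (e.symm.injective h') (by decide)
end

section
/- For every n ≥ 5, the gp-chromatic number of the cycle C_n equals ⌈n/3⌉. -/
/-!
On a shortest path, of any three vertices one lies metrically between the other two, and
conversely two shortest paths `x → y → z` with `d(x,y) + d(y,z) = d(x,z)` concatenate to a
shortest path; so a set is in general position iff none of its vertices lies between two others.

In `C_n` the distance is `d(x,y) = min(|x-y|, n-|x-y|)`. Of four vertices `a < b < c < d`, one of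
the arcs `a → b → c` and `c → d → a` has length at most `n/2`, so its middle vertex lies between
its ends: a general position set has at most three vertices, and a `k`-colouring needs
`n ≤ 3k`. Conversely, if `n ≤ 3k`, a residue class modulo `k` is contained in
`{r, r+k, r+2k}`, with pairwise distances `k, k, n-2k`, and none of these is the sum of the other
two, so colouring by residues modulo `⌈n/3⌉` works.
-/

open SimpleGraph

namespace SimpleGraph

variable {V : Type*} {G : SimpleGraph V} {u v x y z : V}

lemma Walk.dist_add_dist_add_dist_of_length_append_eq (p : G.Walk u x) (q : G.Walk x y)
    (r : G.Walk y v) (h : (p.append (q.append r)).length = G.dist u v) :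
    G.dist u x + G.dist x y + G.dist y v = G.dist u v := by
  have huv : G.dist u v ≤ G.dist u x + G.dist x y + G.dist y v :=
    calc G.dist u v ≤ G.dist u x + G.dist x v := p.reachable.dist_triangle_left v
      _ ≤ G.dist u x + (G.dist x y + G.dist y v) := by
        gcongr; exact q.reachable.dist_triangle_left v
      _ = _ := by ring
  have := dist_le p
  have := dist_le q
  have := dist_le r
  simp only [Walk.length_append] at h
  omega

lemma Walk.dist_add_dist_add_dist_of_mem_support {p : G.Walk u v}
    (hp : p.length = G.dist u v) (hx : x ∈ p.support) (hy : y ∈ p.support) :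
    G.dist u x + G.dist x y + G.dist y v = G.dist u v ∨
      G.dist u y + G.dist y x + G.dist x v = G.dist u v := by
  classical
  rw [← p.take_spec hx] at hp hy
  set q := p.takeUntil x hx
  set r := p.dropUntil x hx
  rcases (Walk.mem_support_append_iff q r).mp hy with hy | hy
  · right
    rw [← q.take_spec hy, ← Walk.append_assoc] at hp
    exact Walk.dist_add_dist_add_dist_of_length_append_eq _ _ _ hp
  · left
    rw [← r.take_spec hy] at hp
    exact Walk.dist_add_dist_add_dist_of_length_append_eq _ _ _ hp

lemma Walk.dist_add_dist_eq_of_mem_support {p : G.Walk u v} (hp : p.length = G.dist u v)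
    (hx : x ∈ p.support) (hy : y ∈ p.support) (hz : z ∈ p.support) :
    G.dist x y + G.dist y z = G.dist x z ∨ G.dist y z + G.dist z x = G.dist y x ∨
      G.dist z x + G.dist x y = G.dist z y := by
  have hxx := Walk.dist_add_dist_add_dist_of_mem_support hp hx hx
  have hyy := Walk.dist_add_dist_add_dist_of_mem_support hp hy hy
  have hzz := Walk.dist_add_dist_add_dist_of_mem_support hp hz hz
  have hxy := Walk.dist_add_dist_add_dist_of_mem_support hp hx hy
  have hyz := Walk.dist_add_dist_add_dist_of_mem_support hp hy hz
  have hxz := Walk.dist_add_dist_add_dist_of_mem_support hp hx hz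
  simp only [dist_self, add_zero] at hxx hyy hzz
  rw [G.dist_comm (u := y) (v := x)] at hxy ⊢
  rw [G.dist_comm (u := z) (v := y)] at hyz ⊢
  rw [G.dist_comm (u := z) (v := x)] at hxz ⊢
  -- `G.dist u ·` places the three vertices on a line, where the middle one is between the others
  omega

end SimpleGraph

theorem IsGenPosSet.eq_or_eq_of_dist_add_dist_eq {V : Type*} {G : SimpleGraph V} {S : Set V}
    (hS : IsGenPosSet G S) (hG : G.Connected) {x y z : V} (hx : x ∈ S) (hy : y ∈ S) (hz : z ∈ S)
    (hxyz : G.dist x y + G.dist y z = G.dist x z) : y = x ∨ y = z := by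
  obtain ⟨p, hp⟩ := hG.exists_walk_length_eq_dist x y
  obtain ⟨q, hq⟩ := hG.exists_walk_length_eq_dist y z
  have hpq : (p.append q).length = G.dist x z := by rw [Walk.length_append, hp, hq, hxyz]
  rcases hS _ (Walk.isPath_of_length_eq_dist _ hpq) hpq x y z hx hy hz
    (Walk.start_mem_support _) (by simp) (Walk.end_mem_support _) with h | h | rfl
  · exact .inl h.symm
  · exact .inr h
  · rw [G.dist_comm (u := y), G.dist_self] at hxyz
    exact .inl ((hG.dist_eq_zero_iff).mp (by omega)).symm

theorem isGenPosSet_of_dist_add_dist_eq {V : Type*} {G : SimpleGraph V} {S : Set V}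
    (hS : ∀ x ∈ S, ∀ y ∈ S, ∀ z ∈ S, G.dist x y + G.dist y z = G.dist x z → y = x ∨ y = z) :
    IsGenPosSet G S := by
  intro u v p _ hp x y z hx hy hz hxp hyp hzp
  rcases Walk.dist_add_dist_eq_of_mem_support hp hxp hyp hzp with h | h | h
  · rcases hS x hx y hy z hz h with h | h <;> simp [h]
  · rcases hS y hy z hz x hx h with h | h <;> simp [h]
  · rcases hS z hz x hx y hy h with h | h <;> simp [h]

namespace SimpleGraph

variable {n : ℕ}

theorem cycleGraph_adj_iff_natDist {u w : Fin n} :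
    (cycleGraph n).Adj u w ↔ u ≠ w ∧ (Nat.dist u w = 1 ∨ Nat.dist u w + 1 = n) := by
  have hu := u.isLt
  have hw := w.isLt
  rw [cycleGraph_adj', Ne, Fin.ext_iff, Nat.dist]
  rcases lt_trichotomy u w with h | rfl | h
  · rw [Fin.coe_sub_iff_lt.mpr h, Fin.coe_sub_iff_le.mpr h.le]
    rw [Fin.lt_def] at h
    omega
  · rw [Fin.coe_sub_iff_le.mpr le_rfl]
    simp
  · rw [Fin.coe_sub_iff_le.mpr h.le, Fin.coe_sub_iff_lt.mpr h]
    rw [Fin.lt_def] at h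
    omega

theorem cycleGraph_dist_le_of_le {x y : Fin n} (h : x ≤ y) :
    (cycleGraph n).dist x y ≤ y - x := by
  obtain ⟨k, hk⟩ := Nat.exists_eq_add_of_le (Fin.le_def.mp h)
  induction k generalizing y with
  | zero => simp [show y = x from Fin.ext (by omega)]
  | succ k ih =>
    set y' : Fin n := ⟨x + k, by omega⟩
    have hadj : (cycleGraph n).Adj y' y := cycleGraph_adj_iff_natDist.mpr
      ⟨by simp [Fin.ext_iff, y']; omega, .inl (by simp [Nat.dist, y']; omega)⟩
    calc (cycleGraph n).dist x y ≤ (cycleGraph n).dist x y' + (cycleGraph n).dist y' y :=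
          (cycleGraph_preconnected x y').dist_triangle_left y
      _ ≤ (y' - x) + 1 :=
        add_le_add (ih (Fin.le_def.mpr (by simp [y'])) rfl) (dist_eq_one_iff_adj.mpr hadj).le
      _ = y - x := by simp [y']; omega

theorem cycleGraph_dist_le_sub_natDist (x y : Fin n) :
    (cycleGraph n).dist x y ≤ n - Nat.dist x y := by
  wlog h : x ≤ y generalizing x y
  · rw [dist_comm, Nat.dist_comm]; exact this y x (le_of_not_ge h)
  have hy := y.isLt
  set last : Fin n := ⟨n - 1, by omega⟩
  set zero : Fin n := ⟨0, by omega⟩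
  have hwrap : (cycleGraph n).dist last zero ≤ 1 := by
    rcases eq_or_ne last zero with h | h
    · simp [h]
    · refine (dist_eq_one_iff_adj.mpr (cycleGraph_adj_iff_natDist.mpr ⟨h, .inr ?_⟩)).le
      simp [Nat.dist, last, zero]
      omega
  calc (cycleGraph n).dist x y = (cycleGraph n).dist y x := dist_comm
    _ ≤ (cycleGraph n).dist y last +
          ((cycleGraph n).dist last zero + (cycleGraph n).dist zero x) := by
      refine ((cycleGraph_preconnected y last).dist_triangle_left x).trans (add_le_add le_rfl ?_)
      exact (cycleGraph_preconnected last zero).dist_triangle_left x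
    _ ≤ (n - 1 - y) + (1 + x) := by
      gcongr
      · exact cycleGraph_dist_le_of_le (Fin.le_def.mpr (by simp [last]; omega))
      · exact cycleGraph_dist_le_of_le (Fin.le_def.mpr (by simp [zero]))
    _ = n - Nat.dist x y := by simp [Nat.dist]; omega

theorem cycleGraph_dist_le_natDist (x y : Fin n) :
    (cycleGraph n).dist x y ≤ Nat.dist x y := by
  rcases le_total x y with h | h
  · rw [Nat.dist_eq_sub_of_le h]; exact cycleGraph_dist_le_of_le h
  · rw [dist_comm, Nat.dist_eq_sub_of_le_right h]; exact cycleGraph_dist_le_of_le h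

theorem cycleGraph_min_natDist_le_length {x y : Fin n} (p : (cycleGraph n).Walk x y) :
    min (Nat.dist x y) (n - Nat.dist x y) ≤ p.length := by
  induction p with
  | nil => simp
  | @cons u w v hadj q ih =>
    have := cycleGraph_adj_iff_natDist.mp hadj
    have hu := u.isLt
    have hv := v.isLt
    have hw := w.isLt
    simp only [Nat.dist, Walk.length_cons] at *
    omega

theorem cycleGraph_dist (x y : Fin n) :
    (cycleGraph n).dist x y = min (Nat.dist x y) (n - Nat.dist x y) := by
  obtain ⟨p, hp⟩ := (cycleGraph_preconnected x y).exists_walk_length_eq_dist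
  exact le_antisymm (le_min (cycleGraph_dist_le_natDist x y) (cycleGraph_dist_le_sub_natDist x y))
    (hp ▸ cycleGraph_min_natDist_le_length p)

theorem cycleGraph_dist_add_dist_eq_or_of_lt {a b c d : Fin n} (hab : a < b) (hbc : b < c)
    (hcd : c < d) :
    (cycleGraph n).dist a b + (cycleGraph n).dist b c = (cycleGraph n).dist a c ∨
      (cycleGraph n).dist c d + (cycleGraph n).dist d a = (cycleGraph n).dist c a := by
  simp only [cycleGraph_dist, Nat.dist]
  rw [Fin.lt_def] at hab hbc hcd
  have := d.isLt
  omega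

end SimpleGraph

theorem Nat.eq_mod_or_eq_mod_add_or_eq_mod_add_two_mul {p k : ℕ} (hp : p < 3 * k) :
    p = p % k ∨ p = p % k + k ∨ p = p % k + 2 * k := by
  have hdiv := Nat.div_add_mod p k
  have : p / k < 3 := Nat.div_lt_of_lt_mul (by rwa [mul_comm] at hp)
  interval_cases p / k <;> omega

theorem isGenPosSet_cycleGraph_setOf_mod_eq {n k r : ℕ} (h : n ≤ 3 * k) :
    IsGenPosSet (cycleGraph n) {v : Fin n | v.val % k = r} := by
  refine isGenPosSet_of_dist_add_dist_eq fun x hx y hy z hz hxyz => ?_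
  simp only [Set.mem_ofPred_eq] at hx hy hz
  have := Nat.eq_mod_or_eq_mod_add_or_eq_mod_add_two_mul (x.isLt.trans_le h)
  have := Nat.eq_mod_or_eq_mod_add_or_eq_mod_add_two_mul (y.isLt.trans_le h)
  have := Nat.eq_mod_or_eq_mod_add_or_eq_mod_add_two_mul (z.isLt.trans_le h)
  rw [cycleGraph_dist, cycleGraph_dist, cycleGraph_dist] at hxyz
  simp only [Fin.ext_iff, Nat.dist] at hxyz ⊢
  have := x.isLt
  have := y.isLt
  have := z.isLt
  omega

theorem IsGenPosSet.card_le_three_of_cycleGraph {n : ℕ} {s : Finset (Fin n)}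
    (hs : IsGenPosSet (cycleGraph n) s) : s.card ≤ 3 := by
  by_contra! hcard
  obtain ⟨t, hts, ht⟩ := Finset.exists_subset_card_eq hcard
  obtain ⟨m, rfl⟩ : ∃ m, n = m + 1 := ⟨n - 1, by
    have := s.card_le_univ
    rw [Fintype.card_fin] at this
    omega⟩
  set f := t.orderEmbOfFin ht
  have hmem (i : Fin 4) : f i ∈ (s : Set (Fin (m + 1))) := hts (t.orderEmbOfFin_mem ht i)
  have hf (i j : Fin 4) (hij : i < j) : f i < f j := f.strictMono hij
  have hne (i j : Fin 4) (hij : i ≠ j) : f i ≠ f j := f.injective.ne hij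
  rcases cycleGraph_dist_add_dist_eq_or_of_lt (hf 0 1 (by decide)) (hf 1 2 (by decide))
    (hf 2 3 (by decide)) with h | h
  · rcases hs.eq_or_eq_of_dist_add_dist_eq cycleGraph_connected (hmem 0) (hmem 1) (hmem 2) h
      with h | h
    · exact hne 1 0 (by decide) h
    · exact hne 1 2 (by decide) h
  · rcases hs.eq_or_eq_of_dist_add_dist_eq cycleGraph_connected (hmem 2) (hmem 3) (hmem 0) h
      with h | h
    · exact hne 3 2 (by decide) h
    · exact hne 3 0 (by decide) h

theorem gpColorable_cycleGraph_iff {n k : ℕ} : GpColorable (cycleGraph n) k ↔ n ≤ 3 * k := by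
  constructor
  · rintro ⟨c, hc⟩
    have hfiber (i : Fin k) : (Finset.univ.filter (c · = i)).card ≤ 3 :=
      IsGenPosSet.card_le_three_of_cycleGraph (by simpa using hc i)
    simpa using Finset.card_le_mul_card_image_of_maps_to (s := Finset.univ)
      (t := Finset.univ) (fun v _ => Finset.mem_univ (c v)) 3 (fun i _ => hfiber i)
  · intro h
    refine ⟨fun v => ⟨v.val % k, Nat.mod_lt _ (by have := v.isLt; omega)⟩, fun i => ?_⟩
    simpa only [Fin.ext_iff] using isGenPosSet_cycleGraph_setOf_mod_eq (r := i) h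

theorem gpChromatic_cycle_general (n : ℕ) :
    gpChromatic (cycleGraph n) = (n + 2) / 3 := by
  have h : {k | GpColorable (cycleGraph n) k} = {k | n ≤ 3 * k} :=
    Set.ext fun _ => gpColorable_cycleGraph_iff
  rw [gpChromatic, h]
  refine le_antisymm (Nat.sInf_le (by simp only [Set.mem_ofPred_eq]; omega)) ?_
  exact le_csInf ⟨(n + 2) / 3, by simp only [Set.mem_ofPred_eq]; omega⟩ fun k hk => by
    simp only [Set.mem_ofPred_eq] at hk; omega

/-- For `n ≥ 5`, `χ_gp(C_n) = ⌈n/3⌉`. -/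
theorem gpChromatic_cycle (n : ℕ) (hn : 5 ≤ n) :
    gpChromatic (cycleGraph n) = (n + 2) / 3 :=
  gpChromatic_cycle_general n
end

section
/- For any connected graph G, χ_gp(G) ≥ ⌈(diam(G) + 1)/2⌉, where diam(G) is the diameter of G. -/
open SimpleGraph

/-- For a connected graph `G`, `χ_gp(G) ≥ ⌈(diam(G) + 1)/2⌉`. -/
theorem gpChromatic_ge_diam {V : Type*} [Fintype V] (G : SimpleGraph V) (hG : G.Connected) :
    (G.diam + 1 + 1) / 2 ≤ gpChromatic G := by
  classical
  have hVne : Nonempty V := hG.nonempty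
  -- the set of valid colour counts is nonempty
  have hmem : GpColorable G (Fintype.card V) := by
    refine ⟨(Fintype.equivFin V), fun i u v p hp hd x y z hx hy hz _ _ _ => ?_⟩
    simp only [Set.mem_setOf_eq] at hx hy
    exact Or.inl ((Fintype.equivFin V).injective (hx.trans hy.symm))
  have hk : gpChromatic G ∈ {k | GpColorable G k} :=
    Nat.sInf_mem ⟨Fintype.card V, hmem⟩
  obtain ⟨c, hc⟩ := hk
  -- a diametral shortest path
  obtain ⟨u, v, huv⟩ := G.exists_dist_eq_diam
  obtain ⟨p, hp, hlen⟩ := hG.exists_path_of_dist u v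
  -- support as a finset
  set s : Finset V := p.support.toFinset with hs
  have hcard : s.card = G.diam + 1 := by
    rw [hs, List.toFinset_card_of_nodup hp.support_nodup,
      SimpleGraph.Walk.length_support, hlen, huv]
  have hfiber : ∀ i ∈ s.image c, (s.filter (fun a => c a = i)).card ≤ 2 := by
    intro i _
    by_contra h
    push_neg at h
    obtain ⟨a, ha, b, hb, d, hd, hab, had, hbd⟩ := Finset.two_lt_card.mp h
    simp only [Finset.mem_filter, hs, List.mem_toFinset] at ha hb hd
    rcases hc i p hp hlen a b d ha.2 hb.2 hd.2 ha.1 hb.1 hd.1 with h' | h' | h' <;>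
      [exact hab h'; exact hbd h'; exact had h']
  have h1 : s.card ≤ 2 * (s.image c).card := Finset.card_le_mul_card_image s 2 hfiber
  have h2 : (s.image c).card ≤ gpChromatic G := by
    have := Finset.card_le_univ (s.image c)
    simpa using this
  omega
end

section
/- For every connected block graph G (a graph in which every 2-connected block is a clique), χ_gp(G) = ⌈(diam(G)+1)/2⌉. -/
open SimpleGraph

/-! Fix a clique `R`. Along a geodesic the distance to `R` changes by at most one per
step, and in a block graph it has no weak local maximum: a geodesic `a - b - c` with `b` at least
as far from `R` as `a` and `c` would close, through shortest paths to `R`, a cycle containing the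
non-adjacent vertices `a` and `c`. So the distance to `R` strictly decreases and then strictly
increases along every geodesic, and colouring each vertex by its distance to `R` is a
general-position colouring. For `R` the middle vertex of a diametral path (or, for odd diameter,
the block of its middle edge) all these distances are at most `diam / 2`. Conversely, a diametral
path has `diam + 1` vertices and meets every general position set in at most two of them. -/

/-- A sequence on `[0, L]` with steps in `{-1, 0, 1}` and no weak local maximum descends with
slope `-1` up to some `s` and ascends with slope `1` after it. -/
theorem exists_vShape (F : ℕ → ℕ) (L : ℕ)
    (hdown : ∀ t < L, F t ≤ F (t + 1) + 1) (hup : ∀ t < L, F (t + 1) ≤ F t + 1)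
    (hpeak : ∀ t, t + 2 ≤ L → F t ≤ F (t + 1) → F (t + 1) < F (t + 2)) :
    ∃ s ≤ L, (∀ t ≤ s, F t + t = F 0) ∧ (∀ t, s < t → t ≤ L → F t + L = F L + t) := by
  have hex : ∃ t, t = L ∨ F t ≤ F (t + 1) := ⟨L, Or.inl rfl⟩
  obtain ⟨s, hsL, hs, hdesc⟩ : ∃ s ≤ L, (s = L ∨ F s ≤ F (s + 1)) ∧ ∀ t < s, F (t + 1) < F t :=
    ⟨Nat.find hex, Nat.find_min' hex (Or.inl rfl), Nat.find_spec hex,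
      fun t ht => by have := Nat.find_min hex ht; omega⟩
  have hweak : ∀ t, s ≤ t → t < L → F t ≤ F (t + 1) := by
    intro t hst
    induction t, hst using Nat.le_induction with
    | base => exact fun hsLt => hs.resolve_left (by omega)
    | succ t hst ih => exact fun ht => (hpeak t (by omega) (ih (by omega))).le
  have hasc : ∀ t, s < t → t < L → F (t + 1) = F t + 1 := fun t hst htL => by
    obtain ⟨t, rfl⟩ : ∃ t', t = t' + 1 := ⟨t - 1, by omega⟩
    have h1 := hpeak t (by omega) (hweak t (by omega) (by omega))
    have h2 : F (t + 2) ≤ F (t + 1) + 1 := hup (t + 1) htL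
    show F (t + 2) = F (t + 1) + 1
    omega
  have hleft : ∀ t ≤ s, F t + t = F 0 := by
    intro t ht
    induction t with
    | zero => rfl
    | succ t ih =>
      have := hdesc t ht
      have := hdown t (by omega)
      have := ih (by omega)
      omega
  have hright : ∀ n t, t + n = L → s < t → F t + L = F L + t := by
    intro n
    induction n with
    | zero => intro t h _; rw [← h]; rfl
    | succ n ih =>
      intro t h hst
      have := hasc t hst (by omega)
      have := ih (t + 1) (by omega) (by omega)
      omega
  exact ⟨s, hsL, hleft, fun t hst htL => hright (L - t) t (by omega) hst⟩

namespace SimpleGraph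

variable {V : Type*} {G : SimpleGraph V}

def CyclesInduceCliques (G : SimpleGraph V) : Prop :=
  ∀ (u : V) (p : G.Walk u u), p.IsCycle → G.IsClique {v | v ∈ p.support}

/-- Shortened to a path and closed up through `b`, the walk is a cycle containing `a` and `c`. -/
theorem CyclesInduceCliques.adj_of_walk (hG : G.CyclesInduceCliques) {a b c : V}
    (hba : G.Adj b a) (hbc : G.Adj b c) (hac : a ≠ c) (q : G.Walk a c) (hb : b ∉ q.support) :
    G.Adj a c := by
  classical
  have hb' : b ∉ q.bypass.support := fun h => hb (q.support_bypass_subset_support h)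
  have hcycle : (Walk.cons hba (q.bypass.concat hbc.symm)).IsCycle := by
    refine (Walk.cons_isCycle_iff _ hba).mpr ⟨q.bypass_isPath.concat hb' _, fun he => ?_⟩
    rw [Walk.edges_concat, List.concat_eq_append, List.mem_append, List.mem_singleton] at he
    rcases he with he | he
    · exact hb' (Walk.fst_mem_support_of_mem_edges _ he)
    · rcases Sym2.eq_iff.mp he with ⟨hbc', -⟩ | ⟨-, hac'⟩
      · exact hbc.ne hbc'
      · exact hac hac'
  exact hG b _ hcycle (by simp) (by simp) hac

namespace Walk

variable {u v : V}

theorem dist_add_dist_of_mem_support {p : G.Walk u v} (hp : p.length = G.dist u v) {w : V}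
    (hw : w ∈ p.support) : G.dist u w + G.dist w v = G.dist u v := by
  classical
  rw [← length_eq_dist_of_subwalk hp (p.isSubwalk_takeUntil hw),
    ← length_eq_dist_of_subwalk hp (p.isSubwalk_dropUntil hw), ← length_append, p.take_spec hw,
    hp]

theorem dist_getVert_getVert_add {p : G.Walk u v} (hp : p.length = G.dist u v) {t n : ℕ}
    (h : t + n ≤ p.length) : G.dist (p.getVert t) (p.getVert (t + n)) = n := by
  have := length_eq_dist_of_subwalk hp (((p.drop t).isSubwalk_take n).trans (p.isSubwalk_drop t))
  simp only [take_length, drop_length, drop_getVert] at this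
  omega

end Walk

theorem IsClique.exists_walk_support_subset {R : Set V} (hR : G.IsClique R) {x y : V}
    (hx : x ∈ R) (hy : y ∈ R) : ∃ p : G.Walk x y, ∀ v ∈ p.support, v ∈ R := by
  by_cases hxy : x = y
  · subst hxy
    exact ⟨.nil, by simpa using hx⟩
  · exact ⟨.cons (hR hx hy hxy) .nil, by simp [hx, hy]⟩

/-- Junk value `0` when `R` is empty. -/
noncomputable def distToSet (G : SimpleGraph V) (R : Set V) (x : V) : ℕ :=
  sInf (G.dist x '' R)

section distToSet

variable {R : Set V} {x : V}

theorem distToSet_le {r : V} (hr : r ∈ R) : G.distToSet R x ≤ G.dist x r :=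
  Nat.sInf_le (Set.mem_image_of_mem _ hr)

theorem exists_dist_eq_distToSet (hR : R.Nonempty) (x : V) :
    ∃ r ∈ R, G.dist x r = G.distToSet R x :=
  Nat.sInf_mem (hR.image _)

@[simp]
theorem distToSet_singleton (x y : V) : G.distToSet {y} x = G.dist x y := by
  simp [distToSet]

theorem Connected.distToSet_eq_zero_iff (hconn : G.Connected) (hR : R.Nonempty) :
    G.distToSet R x = 0 ↔ x ∈ R := by
  refine ⟨fun h => ?_, fun hx => by simpa using distToSet_le (G := G) (x := x) hx⟩
  obtain ⟨r, hr, hxr⟩ := exists_dist_eq_distToSet (G := G) hR x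
  rwa [hconn.dist_eq_zero_iff.mp (hxr.trans h)]

theorem Connected.distToSet_le_add_one (hconn : G.Connected) (hR : R.Nonempty) {a b : V}
    (hab : G.Adj a b) : G.distToSet R a ≤ G.distToSet R b + 1 := by
  obtain ⟨r, hr, hbr⟩ := exists_dist_eq_distToSet (G := G) hR b
  calc G.distToSet R a ≤ G.dist a r := distToSet_le hr
    _ ≤ G.dist a b + G.dist b r := hconn.dist_triangle
    _ = G.distToSet R b + 1 := by rw [dist_eq_one_iff_adj.mpr hab, hbr, add_comm]

end distToSet

namespace CyclesInduceCliques

theorem distToSet_lt_of_dist_eq_two (hG : G.CyclesInduceCliques) (hconn : G.Connected)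
    {R : Set V} (hR : G.IsClique R) (hRne : R.Nonempty)
    {a b c : V} (hab : G.Adj a b) (hbc : G.Adj b c) (hac : G.dist a c = 2)
    (hle : G.distToSet R a ≤ G.distToSet R b) : G.distToSet R b < G.distToSet R c := by
  by_contra! hcb
  have hne : a ≠ c := by rintro rfl; simp at hac
  suffices G.Adj a c by rw [← dist_eq_one_iff_adj] at this; omega
  by_cases hb0 : G.distToSet R b = 0
  · exact hR ((hconn.distToSet_eq_zero_iff hRne).mp (by omega))
      ((hconn.distToSet_eq_zero_iff hRne).mp (by omega)) hne
  have hbR : b ∉ R := fun h => hb0 ((hconn.distToSet_eq_zero_iff hRne).mpr h)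
  -- Geodesics from `a` and from `c` to `R` avoid `b`; joined inside `R`, they bypass `b`.
  obtain ⟨ra, hra, hda⟩ := exists_dist_eq_distToSet (G := G) hRne a
  obtain ⟨rc, hrc, hdc⟩ := exists_dist_eq_distToSet (G := G) hRne c
  obtain ⟨A, hA⟩ := hconn.exists_walk_length_eq_dist a ra
  obtain ⟨C, hC⟩ := hconn.exists_walk_length_eq_dist c rc
  obtain ⟨E, hE⟩ := hR.exists_walk_support_subset hra hrc
  have hbA : b ∉ A.support := fun h => by
    have := A.dist_add_dist_of_mem_support hA h
    have := distToSet_le (G := G) (x := b) hra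
    have := dist_eq_one_iff_adj.mpr hab
    omega
  have hbC : b ∉ C.support := fun h => by
    have := C.dist_add_dist_of_mem_support hC h
    have := distToSet_le (G := G) (x := b) hrc
    have := dist_eq_one_iff_adj.mpr hbc.symm
    omega
  refine hG.adj_of_walk hab.symm hbc hne (A.append (E.append C.reverse)) ?_
  simp only [Walk.mem_support_append_iff, Walk.support_reverse, List.mem_reverse]
  exact fun h => h.elim hbA (·.elim (fun h => hbR (hE b h)) hbC)

theorem exists_adj_adj_dist_eq (hG : G.CyclesInduceCliques) (hconn : G.Connected)
    {x m m' : V} (hmm' : G.Adj m m') {j : ℕ}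
    (hm : G.dist x m = j + 1) (hm' : G.dist x m' = j + 1) :
    ∃ w, G.Adj w m ∧ G.Adj w m' ∧ G.dist x w = j := by
  obtain ⟨A, hA⟩ := hconn.exists_walk_length_eq_dist m x
  cases A with
  | nil => simp at hm
  | @cons _ w _ hmw q =>
    have hmq : m ∉ q.support := ((Walk.cons hmw q).isPath_of_length_eq_dist hA).support_nodup
      |> List.nodup_cons.mp |>.1
    have hwx : G.dist x w = j := by
      have h1 := dist_le q
      have h2 : G.dist m x ≤ G.dist m w + G.dist w x := hconn.dist_triangle
      rw [Walk.length_cons, dist_comm, hm] at hA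
      rw [dist_eq_one_iff_adj.mpr hmw, dist_comm, hm] at h2
      rw [dist_comm]
      omega
    obtain ⟨B, hB⟩ := hconn.exists_walk_length_eq_dist x m'
    have hmB : m ∉ B.support := fun h => by
      have := B.dist_add_dist_of_mem_support hB h
      rw [dist_eq_one_iff_adj.mpr hmm'] at this
      omega
    have hwm' : w ≠ m' := fun h => by rw [h] at hwx; omega
    refine ⟨w, hmw.symm, hG.adj_of_walk hmw hmm' hwm' (q.append B) ?_, hwx⟩
    simp only [Walk.mem_support_append_iff]
    exact fun h => h.elim hmq hmB

theorem isClique_insert_insert_commonNeighbors (hG : G.CyclesInduceCliques) {m m' : V}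
    (hmm' : G.Adj m m') : G.IsClique (insert m (insert m' (G.commonNeighbors m m'))) := by
  have hcommon : G.IsClique (G.commonNeighbors m m') := by
    intro w₁ h₁ w₂ h₂ hne
    rw [mem_commonNeighbors] at h₁ h₂
    exact hG.adj_of_walk h₁.1 h₂.1 hne (.cons h₁.2.symm (.cons h₂.2 .nil))
      (by simp [h₁.1.ne, h₂.1.ne, hmm'.ne])
  refine isClique_insert.mpr ⟨isClique_insert.mpr ⟨hcommon, fun w hw _ => hw.2⟩, ?_⟩
  rintro w (rfl | hw) hne
  exacts [hmm', hw.1]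

theorem exists_vShape_distToSet (hG : G.CyclesInduceCliques) (hconn : G.Connected)
    {R : Set V} (hR : G.IsClique R) (hRne : R.Nonempty) {u v : V} (p : G.Walk u v)
    (hp : p.length = G.dist u v) :
    ∃ s ≤ p.length, (∀ t ≤ s, G.distToSet R (p.getVert t) + t = G.distToSet R u) ∧
      (∀ t, s < t → t ≤ p.length →
        G.distToSet R (p.getVert t) + p.length = G.distToSet R v + t) := by
  have hadj : ∀ t < p.length, G.Adj (p.getVert t) (p.getVert (t + 1)) :=
    fun t ht => p.adj_getVert_succ ht
  simpa only [p.getVert_zero, p.getVert_length] using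
    exists_vShape (fun t => G.distToSet R (p.getVert t)) p.length
      (fun t ht => hconn.distToSet_le_add_one hRne (hadj t ht))
      (fun t ht => hconn.distToSet_le_add_one hRne (hadj t ht).symm)
      (fun t ht hle => hG.distToSet_lt_of_dist_eq_two hconn hR hRne (hadj t (by omega))
        (hadj (t + 1) (by omega)) (p.dist_getVert_getVert_add hp ht) hle)

theorem isGenPosSet_distToSet_eq (hG : G.CyclesInduceCliques) (hconn : G.Connected)
    {R : Set V} (hR : G.IsClique R) (hRne : R.Nonempty) (n : ℕ) :
    IsGenPosSet G {x | G.distToSet R x = n} := by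
  intro u v p _ hp x y z hx hy hz hxp hyp hzp
  obtain ⟨s, -, hleft, hright⟩ := hG.exists_vShape_distToSet hconn hR hRne p hp
  -- On each side of `s` the distance to `R` is injective, so one level meets each side once.
  have eq_of_same_side : ∀ a ≤ p.length, ∀ b ≤ p.length, G.distToSet R (p.getVert a) = n →
      G.distToSet R (p.getVert b) = n → (a ≤ s ↔ b ≤ s) → p.getVert a = p.getVert b := by
    intro a ha b hb hFa hFb hab
    congr 1
    by_cases has : a ≤ s
    · have := hleft a has
      have := hleft b (hab.mp has)
      omega
    · have := hright a (by omega) ha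
      have := hright b (by rw [hab] at has; omega) hb
      omega
  obtain ⟨i, rfl, hi⟩ := Walk.mem_support_iff_exists_getVert.mp hxp
  obtain ⟨j, rfl, hj⟩ := Walk.mem_support_iff_exists_getVert.mp hyp
  obtain ⟨k, rfl, hk⟩ := Walk.mem_support_iff_exists_getVert.mp hzp
  have : (i ≤ s ↔ j ≤ s) ∨ (j ≤ s ↔ k ≤ s) ∨ (i ≤ s ↔ k ≤ s) := by tauto
  rcases this with h | h | h
  · exact .inl (eq_of_same_side i hi j hj hx hy h)
  · exact .inr (.inl (eq_of_same_side j hj k hk hy hz h))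
  · exact .inr (.inr (eq_of_same_side i hi k hk hx hz h))

theorem dist_getVert_le_max (hG : G.CyclesInduceCliques) (hconn : G.Connected) {u v : V}
    (p : G.Walk u v) (hp : p.length = G.dist u v) {x : V} (hu : G.dist u x ≤ p.length)
    (hv : G.dist v x ≤ p.length) {t : ℕ} (ht : t ≤ p.length) :
    G.dist (p.getVert t) x ≤ max t (p.length - t) := by
  obtain ⟨s, -, hleft, hright⟩ :=
    hG.exists_vShape_distToSet hconn (isClique_singleton x) (Set.singleton_nonempty x) p hp
  simp only [distToSet_singleton] at hleft hright
  by_cases hts : t ≤ s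
  · have := hleft t hts
    omega
  · have := hright t (by omega) ht
    omega

theorem exists_isClique_distToSet_le [Finite V] (hG : G.CyclesInduceCliques)
    (hconn : G.Connected) :
    ∃ R : Set V, G.IsClique R ∧ R.Nonempty ∧ ∀ x, G.distToSet R x ≤ G.diam / 2 := by
  have := hconn.nonempty
  have hdiam : ∀ a b, G.dist a b ≤ G.diam :=
    fun a b => dist_le_diam (connected_iff_ediam_ne_top.mp hconn)
  obtain ⟨u, v, huv⟩ := exists_dist_eq_diam (G := G)
  obtain ⟨P, hP⟩ := hconn.exists_walk_length_eq_dist u v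
  have hPd : P.length = G.diam := hP.trans huv
  have hbound : ∀ t ≤ G.diam, ∀ x, G.dist x (P.getVert t) ≤ max t (G.diam - t) := by
    intro t ht x
    rw [dist_comm, ← hPd]
    exact hG.dist_getVert_le_max hconn P hP (hPd ▸ hdiam u x) (hPd ▸ hdiam v x) (hPd ▸ ht)
  obtain ⟨k, hk | hk⟩ := Nat.even_or_odd' G.diam
  · refine ⟨{P.getVert k}, isClique_singleton _, Set.singleton_nonempty _, fun x => ?_⟩
    have := hbound k (by omega) x
    rw [distToSet_singleton]
    omega
  · have hmm' : G.Adj (P.getVert k) (P.getVert (k + 1)) := P.adj_getVert_succ (by omega)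
    set m := P.getVert k
    set m' := P.getVert (k + 1)
    set R := insert m (insert m' (G.commonNeighbors m m'))
    refine ⟨R, hG.isClique_insert_insert_commonNeighbors hmm', Set.insert_nonempty _ _,
      fun x => ?_⟩
    have hm : G.dist x m ≤ k + 1 := (hbound k (by omega) x).trans (by omega)
    have hm' : G.dist x m' ≤ k + 1 := (hbound (k + 1) (by omega) x).trans (by omega)
    have hxm : G.distToSet R x ≤ G.dist x m := distToSet_le (Set.mem_insert _ _)
    have hxm' : G.distToSet R x ≤ G.dist x m' :=
      distToSet_le (Set.mem_insert_of_mem _ (Set.mem_insert _ _))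
    by_contra! hfar
    obtain ⟨w, hwm, hwm', hxw⟩ :=
      hG.exists_adj_adj_dist_eq hconn hmm' (x := x) (j := k) (by omega) (by omega)
    have hwR : w ∈ R := Set.mem_insert_of_mem _
      (Set.mem_insert_of_mem _ (G.mem_commonNeighbors.mpr ⟨hwm.symm, hwm'.symm⟩))
    have := distToSet_le (G := G) (x := x) hwR
    omega

theorem gpColorable_of_distToSet_lt (hG : G.CyclesInduceCliques) (hconn : G.Connected)
    {R : Set V} (hR : G.IsClique R) (hRne : R.Nonempty) {k : ℕ}
    (hk : ∀ x, G.distToSet R x < k) : GpColorable G k := by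
  refine ⟨fun x => ⟨G.distToSet R x, hk x⟩, fun i => ?_⟩
  simpa only [Fin.ext_iff] using hG.isGenPosSet_distToSet_eq hconn hR hRne i

end CyclesInduceCliques

end SimpleGraph

theorem IsGenPosSet.card_filter_support_le_two {V : Type*} [DecidableEq V] {G : SimpleGraph V}
    {S : Set V} [DecidablePred (· ∈ S)] (hS : IsGenPosSet G S) {u v : V} (p : G.Walk u v)
    (hp : p.length = G.dist u v) : (p.support.toFinset.filter (· ∈ S)).card ≤ 2 := by
  by_contra! h
  obtain ⟨a, ha, b, hb, c, hc, hab, hac, hbc⟩ := Finset.two_lt_card.mp h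
  simp only [Finset.mem_filter, List.mem_toFinset] at ha hb hc
  rcases hS p (p.isPath_of_length_eq_dist hp) hp a b c ha.2 hb.2 hc.2 ha.1 hb.1 hc.1 with h | h | h
  exacts [hab h, hbc h, hac h]

theorem GpColorable.diam_add_one_le {V : Type*} {G : SimpleGraph V} (hconn : G.Connected)
    {k : ℕ} (h : GpColorable G k) : G.diam + 1 ≤ 2 * k := by
  classical
  obtain ⟨c, hc⟩ := h
  have := hconn.nonempty
  obtain ⟨u, v, huv⟩ := exists_dist_eq_diam (G := G)
  obtain ⟨P, hP⟩ := hconn.exists_walk_length_eq_dist u v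
  calc G.diam + 1 = P.support.toFinset.card := by
        rw [List.toFinset_card_of_nodup (P.isPath_of_length_eq_dist hP).support_nodup,
          Walk.length_support, hP, huv]
    _ = ∑ i, (P.support.toFinset.filter (c · = i)).card :=
        Finset.card_eq_sum_card_fiberwise fun x _ => Finset.mem_univ (c x)
    _ ≤ ∑ _i : Fin k, 2 := Finset.sum_le_sum fun i _ => (hc i).card_filter_support_le_two P hP
    _ = 2 * k := by simp [mul_comm]

/-- For a connected block graph `G` (every cycle induces a clique),
`χ_gp(G) = ⌈(diam(G)+1)/2⌉`. -/
theorem gpChromatic_blockGraph {V : Type*} [Fintype V] (G : SimpleGraph V) (hG : G.Connected)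
    (hblock : ∀ (u : V) (p : G.Walk u u), p.IsCycle → G.IsClique {v | v ∈ p.support}) :
    gpChromatic G = (G.diam + 1 + 1) / 2 := by
  obtain ⟨R, hR, hRne, hRdist⟩ := CyclesInduceCliques.exists_isClique_distToSet_le hblock hG
  have hcol : GpColorable G (G.diam / 2 + 1) :=
    CyclesInduceCliques.gpColorable_of_distToSet_lt hblock hG hR hRne
      fun x => Nat.lt_succ_of_le (hRdist x)
  have hmin : gpChromatic G = G.diam / 2 + 1 := by
    refine le_antisymm (Nat.sInf_le hcol) ?_
    have hmem : GpColorable G (gpChromatic G) :=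
      Nat.sInf_mem (s := {k | GpColorable G k}) ⟨_, hcol⟩
    have := hmem.diam_add_one_le hG
    omega
  omega
end

section
/- For integers a ≥ 1 and n ≥ 1, there exists a graph G of order n with χ_gp(G) = a if and only if n ≥ 2a − 1. -/
open SimpleGraph

/-!
Any set of at most two vertices is in general position, so colouring the vertices in pairs gives
`χ_gp(G) ≤ ⌈n/2⌉`, i.e. `n ≥ 2 χ_gp(G) - 1`. Conversely, a general position set meets a shortest
path in at most two vertices, so by pigeonhole a shortest path on `2a - 1` vertices needs `a`
colours; the path on `2a - 1` vertices padded with isolated vertices attains `χ_gp = a`.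
-/

namespace IsGenPosSet

variable {V : Type*} {G : SimpleGraph V} {S T : Set V}

theorem mono (hT : IsGenPosSet G T) (hST : S ⊆ T) : IsGenPosSet G S :=
  fun _ _ p hp hlen x y z hx hy hz => hT p hp hlen x y z (hST hx) (hST hy) (hST hz)

theorem of_encard_le_two (hS : S.encard ≤ 2) : IsGenPosSet G S := by
  intro _ _ _ _ _ x y z hx hy hz _ _ _
  by_contra! h
  have h3 : ({x, y, z} : Set V).encard = 3 :=
    Set.encard_eq_three.2 ⟨x, y, z, h.1, h.2.2, h.2.1, rfl⟩
  have hsub : ({x, y, z} : Set V) ⊆ S := by simp [Set.insert_subset_iff, hx, hy, hz]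
  have := (Set.encard_le_encard hsub).trans hS
  rw [h3] at this
  norm_num at this

theorem union_of_isolated (hS : IsGenPosSet G S) (hT : ∀ v ∈ T, ∀ w, ¬ G.Adj v w) :
    IsGenPosSet G (S ∪ T) := by
  intro u v p hp hlen x y z hx hy hz hxp hyp hzp
  by_cases hnil : p.Nil
  · simp only [Walk.nil_iff_support_eq.1 hnil, List.mem_singleton] at hxp hyp hzp
    exact Or.inl (hxp.trans hyp.symm)
  -- on a walk with at least one edge every vertex has a neighbour
  have hS' : ∀ w ∈ S ∪ T, w ∈ p.support → w ∈ S := by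
    rintro w (hw | hw) hwp
    · exact hw
    obtain ⟨e, he, hwe⟩ := (Walk.mem_support_iff_exists_mem_edges_of_not_nil hnil).1 hwp
    induction e using Sym2.ind with
    | _ a b =>
      rcases Sym2.mem_iff.1 hwe with rfl | rfl
      · exact absurd (p.adj_of_mem_edges he) (hT w hw b)
      · exact absurd (p.adj_of_mem_edges he).symm (hT w hw a)
  exact hS p hp hlen x y z (hS' x hx hxp) (hS' y hy hyp) (hS' z hz hzp) hxp hyp hzp

end IsGenPosSet

open Finset in
theorem GpColorable.dist_lt_two_mul {V : Type*} {G : SimpleGraph V} {k : ℕ} (hc : GpColorable G k)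
    {u v : V} (huv : G.Reachable u v) : G.dist u v < 2 * k := by
  classical
  obtain ⟨c, hc⟩ := hc
  obtain ⟨p, hp, hlen⟩ := huv.exists_path_of_dist
  by_contra! h
  have hcard : p.support.toFinset.card = p.length + 1 := by
    rw [List.toFinset_card_of_nodup hp.support_nodup, Walk.length_support]
  obtain ⟨i, -, hi⟩ := exists_lt_card_fiber_of_mul_lt_card_of_maps_to (n := 2)
    (fun v _ => mem_univ (c v)) (by rw [hcard, card_univ, Fintype.card_fin]; omega)
  obtain ⟨x, hx, y, hy, z, hz, hxy, hxz, hyz⟩ := two_lt_card.1 hi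
  simp only [mem_filter, List.mem_toFinset] at hx hy hz
  have := hc i p hp hlen x y z hx.2 hy.2 hz.2 hx.1 hy.1 hz.1
  tauto

theorem encard_setOf_div_two_eq_le {α : Type*} {f : α → ℕ} (hf : Function.Injective f)
    (i : ℕ) : {x | f x / 2 = i}.encard ≤ 2 := by
  calc {x | f x / 2 = i}.encard
      ≤ ({2 * i, 2 * i + 1} : Set ℕ).encard :=
        Set.encard_le_encard_of_injOn (fun x (hx : f x / 2 = i) => by simp; omega) hf.injOn
    _ = 2 := Set.encard_pair (by omega)

theorem gpColorable_of_card_le {V : Type*} [Fintype V] (G : SimpleGraph V) {k : ℕ}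
    (hk : Fintype.card V ≤ 2 * k) : GpColorable G k := by
  let e := Fintype.equivFin V
  refine ⟨fun v => ⟨(e v : ℕ) / 2, by omega⟩, fun i => ?_⟩
  simp only [Fin.ext_iff]
  exact .of_encard_le_two (encard_setOf_div_two_eq_le (Fin.val_injective.comp e.injective) i)

theorem gpChromatic_le {V : Type*} [Fintype V] (G : SimpleGraph V) :
    gpChromatic G ≤ (Fintype.card V + 1) / 2 :=
  Nat.sInf_le (gpColorable_of_card_le G (by omega))

theorem SimpleGraph.Walk.apply_le_apply_add_length {V : Type*} {G : SimpleGraph V} {f : V → ℕ}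
    (hf : ∀ x y, G.Adj x y → f y ≤ f x + 1) {u v : V} (p : G.Walk u v) :
    f v ≤ f u + p.length := by
  induction p with
  | nil => simp
  | cons h _ ih => have := hf _ _ h; rw [Walk.length_cons]; omega

/-- The path `0 – 1 – ⋯ – (m-1)`, with the remaining vertices of `Fin n` isolated. -/
def initialPathGraph (m n : ℕ) : SimpleGraph (Fin n) :=
  SimpleGraph.fromRel fun u v => (u : ℕ) + 1 = v ∧ (v : ℕ) < m

namespace initialPathGraph

variable {m n : ℕ}

theorem val_le_of_adj {u v : Fin n} (h : (initialPathGraph m n).Adj u v) : (v : ℕ) ≤ u + 1 := by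
  obtain ⟨-, h | h⟩ := h <;> omega

theorem not_adj_of_le {u : Fin n} (hu : m ≤ u) (v : Fin n) :
    ¬ (initialPathGraph m n).Adj u v := by
  rintro ⟨-, h | h⟩ <;> omega

theorem reachable_zero {i : ℕ} (him : i < m) (hin : i < n) :
    (initialPathGraph m n).Reachable ⟨0, by omega⟩ ⟨i, hin⟩ := by
  induction i with
  | zero => rfl
  | succ i ih =>
    refine (ih (by omega) (by omega)).trans (Adj.reachable ⟨?_, Or.inl ⟨rfl, him⟩⟩)
    simp [Fin.ext_iff]

theorem le_dist_zero {i : ℕ} (him : i < m) (hin : i < n) :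
    i ≤ (initialPathGraph m n).dist ⟨0, by omega⟩ ⟨i, hin⟩ := by
  obtain ⟨p, hp⟩ := (reachable_zero him hin).exists_walk_length_eq_dist
  rw [← hp]
  simpa using p.apply_le_apply_add_length (f := Fin.val) fun _ _ => val_le_of_adj

theorem gpColorable {k : ℕ} (hk : 0 < k) (hm : m ≤ 2 * k) :
    GpColorable (initialPathGraph m n) k := by
  refine ⟨fun v => ⟨min (v : ℕ) (2 * k - 1) / 2, by omega⟩, fun i => ?_⟩
  have hpair : IsGenPosSet (initialPathGraph m n) {v : Fin n | (v : ℕ) / 2 = i} :=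
    .of_encard_le_two (encard_setOf_div_two_eq_le Fin.val_injective i)
  refine (hpair.union_of_isolated (T := {v : Fin n | m ≤ (v : ℕ)})
    fun v hv => not_adj_of_le hv).mono fun v hv => ?_
  simp only [Set.mem_ofPred_eq, Fin.ext_iff, Set.mem_union] at hv ⊢
  omega

theorem le_two_mul_of_gpColorable {k : ℕ} (hm : 0 < m) (hmn : m ≤ n)
    (hc : GpColorable (initialPathGraph m n) k) : m ≤ 2 * k := by
  have hlast : m - 1 < m := Nat.sub_one_lt_of_lt hm
  have := (le_dist_zero hlast (by omega)).trans_lt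
    (hc.dist_lt_two_mul (reachable_zero hlast (by omega)))
  omega

theorem gpChromatic_eq (hm : 0 < m) (hmn : m ≤ n) :
    gpChromatic (initialPathGraph m n) = (m + 1) / 2 :=
  IsLeast.csInf_eq ⟨gpColorable (by omega) (by omega),
    fun _ hk => by have := le_two_mul_of_gpColorable hm hmn hk; omega⟩

end initialPathGraph

theorem exists_graph_gpChromatic_general (a n : ℕ) (ha : 1 ≤ a) :
    (∃ G : SimpleGraph (Fin n), gpChromatic G = a) ↔ 2 * a - 1 ≤ n := by
  constructor
  · rintro ⟨G, rfl⟩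
    have := gpChromatic_le G
    rw [Fintype.card_fin] at this
    omega
  · intro h
    refine ⟨initialPathGraph (2 * a - 1) n, ?_⟩
    rw [initialPathGraph.gpChromatic_eq (by omega) h]
    omega

/-- For `a ≥ 1`, `n ≥ 1`, there is a graph of order `n` with `χ_gp(G) = a` iff `n ≥ 2a − 1`. -/
theorem exists_graph_gpChromatic (a n : ℕ) (ha : 1 ≤ a) (hn : 1 ≤ n) :
    (∃ G : SimpleGraph (Fin n), gpChromatic G = a) ↔ 2 * a - 1 ≤ n :=
  exists_graph_gpChromatic_general a n ha
end

section
/- If G is a connected graph with diam(G) ≤ 3, then every independent set of G is a general position set, and consequently χ_gp(G) ≤ χ(G) and χ_igp(G) ≤ χ(G). -/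
open SimpleGraph

/-- The igp-chromatic number: least number of colours so that each colour class is an
independent set in general position. -/
noncomputable def igpChromatic {V : Type*} (G : SimpleGraph V) : ℕ :=
  sInf {k | ∃ c : V → Fin k, ∀ i,
    ({v | c v = i} : Set V).Pairwise (fun u w => ¬ G.Adj u w) ∧ IsGenPosSet G {v | c v = i}}

/-- Splitting a geodesic at a support vertex gives two geodesics. -/
lemma geodesic_split {V : Type*} [DecidableEq V] {G : SimpleGraph V} (hG : G.Connected) {u v x : V}
    (p : G.Walk u v) (hp : p.length = G.dist u v) (hx : x ∈ p.support) :
    G.dist u x + G.dist x v = G.dist u v ∧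
      (p.takeUntil x hx).length = G.dist u x ∧
      (p.dropUntil x hx).length = G.dist x v := by
  have h1 := G.dist_le (p.takeUntil x hx)
  have h2 := G.dist_le (p.dropUntil x hx)
  have h3 : (p.takeUntil x hx).length + (p.dropUntil x hx).length = p.length := by
    rw [← SimpleGraph.Walk.length_append, SimpleGraph.Walk.take_spec]
  have h4 := hG.dist_triangle (u := u) (v := x) (w := v)
  omega

/-- On a geodesic, the distances to the start are linearly arranged. -/
lemma geodesic_linear {V : Type*} [DecidableEq V] {G : SimpleGraph V} (hG : G.Connected) {u v x y : V}
    (p : G.Walk u v) (hp : p.length = G.dist u v) (hx : x ∈ p.support) (hy : y ∈ p.support) :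
    G.dist u x + G.dist x y = G.dist u y ∨ G.dist u y + G.dist x y = G.dist u x := by
  obtain ⟨hsum, htake, hdrop⟩ := geodesic_split hG p hp hx
  have hy' : y ∈ (p.takeUntil x hx).support ∨ y ∈ (p.dropUntil x hx).support := by
    have hspec := SimpleGraph.Walk.take_spec p hx
    rw [← hspec] at hy
    exact (SimpleGraph.Walk.mem_support_append_iff _ _).mp hy
  rcases hy' with h | h
  · right
    obtain ⟨hsum2, _, _⟩ := geodesic_split hG (p.takeUntil x hx) (htake.trans rfl) h
    rw [SimpleGraph.dist_comm (u := y) (v := x)] at hsum2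
    omega
  · left
    obtain ⟨hsum2, _, _⟩ := geodesic_split hG (p.dropUntil x hx) (hdrop.trans rfl) h
    obtain ⟨hsum3, _, _⟩ := geodesic_split hG p hp
      (SimpleGraph.Walk.support_dropUntil_subset p hx h)
    omega

/-- If `G` is connected with `diam(G) ≤ 3`, then every independent set is in general position,
and `χ_gp(G) ≤ χ(G)` and `χ_igp(G) ≤ χ(G)`. -/
theorem diam_le_three_indep_genPos {V : Type*} [Fintype V] (G : SimpleGraph V)
    (hG : G.Connected) (hd : G.diam ≤ 3) :
    (∀ S : Set V, S.Pairwise (fun u w => ¬ G.Adj u w) → IsGenPosSet G S) ∧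
      (gpChromatic G : ℕ∞) ≤ G.chromaticNumber ∧
      (igpChromatic G : ℕ∞) ≤ G.chromaticNumber := by
  have hne : Nonempty V := hG.nonempty
  have hediam : G.ediam ≠ ⊤ := by
    obtain ⟨a, b, hab⟩ := SimpleGraph.exists_edist_eq_ediam_of_finite (G := G)
    rw [← hab]
    exact SimpleGraph.edist_ne_top_iff_reachable.mpr (hG.preconnected a b)
  have hdist3 : ∀ a b : V, G.dist a b ≤ 3 := fun a b =>
    le_trans (SimpleGraph.dist_le_diam hediam) hd
  have hdist2 : ∀ a b : V, a ≠ b → ¬ G.Adj a b → 2 ≤ G.dist a b := by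
    intro a b hab hnadj
    have h0 : G.dist a b ≠ 0 := fun h => hab ((hG.dist_eq_zero_iff).mp h)
    have h1 : G.dist a b ≠ 1 := fun h => hnadj (SimpleGraph.dist_eq_one_iff_adj.mp h)
    omega
  have part1 : ∀ S : Set V, S.Pairwise (fun u w => ¬ G.Adj u w) → IsGenPosSet G S := by
    intro S hS u v p _hp hlen x y z hxS hyS hzS hxp hyp hzp
    classical
    by_contra hcon
    push_neg at hcon
    obtain ⟨hxy, hyz, hxz⟩ := hcon
    have dxy := hdist2 x y hxy (hS hxS hyS hxy)
    have dyz := hdist2 y z hyz (hS hyS hzS hyz)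
    have dxz := hdist2 x z hxz (hS hxS hzS hxz)
    have lxy := geodesic_linear hG p hlen hxp hyp
    have lyz := geodesic_linear hG p hlen hyp hzp
    have lxz := geodesic_linear hG p hlen hxp hzp
    have bxy := hdist3 x y
    have byz := hdist3 y z
    have bxz := hdist3 x z
    omega
  refine ⟨part1, ?_⟩
  -- obtain a proper colouring with χ(G) colours
  set n : ℕ := G.chromaticNumber.toNat with hn
  have hcol : G.Colorable n := G.colorable_chromaticNumber_of_fintype
  have hcast : (n : ℕ∞) = G.chromaticNumber := by
    apply ENat.coe_toNat
    exact SimpleGraph.chromaticNumber_ne_top_iff_exists.mpr ⟨_, G.colorable_of_fintype⟩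
  obtain ⟨C⟩ := hcol
  have hindep : ∀ i : Fin n, ({v | C v = i} : Set V).Pairwise (fun u w => ¬ G.Adj u w) := by
    intro i a ha b hb hab hadj
    exact C.valid hadj (ha.trans hb.symm)
  constructor
  · have hmem : n ∈ {k | GpColorable G k} := ⟨C, fun i => part1 _ (hindep i)⟩
    have := Nat.sInf_le hmem
    calc (gpChromatic G : ℕ∞) ≤ (n : ℕ∞) := by exact_mod_cast this
      _ = G.chromaticNumber := hcast
  · have hmem : n ∈ {k | ∃ c : V → Fin k, ∀ i,
        ({v | c v = i} : Set V).Pairwise (fun u w => ¬ G.Adj u w) ∧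
          IsGenPosSet G {v | c v = i}} :=
      ⟨C, fun i => ⟨hindep i, part1 _ (hindep i)⟩⟩
    have := Nat.sInf_le hmem
    calc (igpChromatic G : ℕ∞) ≤ (n : ℕ∞) := by exact_mod_cast this
      _ = G.chromaticNumber := hcast
end

section
/- If G is a connected graph with 2 ≤ diam(G) ≤ 3, then χ_igp(G) = χ(G). -/
open SimpleGraph

private lemma no_consec {V : Type*} {G : SimpleGraph V} {S : Set V}
    (hS : S.Pairwise (fun u w => ¬ G.Adj u w)) {u v : V} (p : G.Walk u v)
    {a : ℕ} (hb : a + 1 ≤ p.length)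
    (hx : p.getVert a ∈ S) (hy : p.getVert (a + 1) ∈ S) : False := by
  have hadj : G.Adj (p.getVert a) (p.getVert (a + 1)) :=
    p.adj_getVert_succ (by omega)
  exact hS hx hy hadj.ne hadj

/-- In a graph where all shortest paths have length ≤ 3, independent sets are in
general position. -/
private lemma indep_isGenPos {V : Type*} [Fintype V] {G : SimpleGraph V}
    (hdiam : G.ediam ≠ ⊤) (h3 : G.diam ≤ 3) {S : Set V}
    (hS : S.Pairwise (fun u w => ¬ G.Adj u w)) : IsGenPosSet G S := by
  intro u v p hp hlen x y z hxS hyS hzS hxp hyp hzp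
  by_contra hne
  push_neg at hne
  obtain ⟨hxy, hyz, hxz⟩ := hne
  obtain ⟨a, ha, haL⟩ := SimpleGraph.Walk.mem_support_iff_exists_getVert.mp hxp
  obtain ⟨b, hb, hbL⟩ := SimpleGraph.Walk.mem_support_iff_exists_getVert.mp hyp
  obtain ⟨c, hc, hcL⟩ := SimpleGraph.Walk.mem_support_iff_exists_getVert.mp hzp
  have hL : p.length ≤ 3 := by
    have := G.dist_le_diam hdiam (u := u) (v := v)
    omega
  have hab : a ≠ b := by rintro rfl; exact hxy (ha ▸ hb ▸ rfl)
  have hbc : b ≠ c := by rintro rfl; exact hyz (hb ▸ hc ▸ rfl)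
  have hac : a ≠ c := by rintro rfl; exact hxz (ha ▸ hc ▸ rfl)
  have : a + 1 = b ∨ b + 1 = a ∨ a + 1 = c ∨ c + 1 = a ∨ b + 1 = c ∨ c + 1 = b := by
    omega
  rcases this with h | h | h | h | h | h
  · exact no_consec hS p (h ▸ hbL) (ha ▸ hxS) (h ▸ hb ▸ hyS)
  · exact no_consec hS p (h ▸ haL) (hb ▸ hyS) (h ▸ ha ▸ hxS)
  · exact no_consec hS p (h ▸ hcL) (ha ▸ hxS) (h ▸ hc ▸ hzS)
  · exact no_consec hS p (h ▸ haL) (hc ▸ hzS) (h ▸ ha ▸ hxS)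
  · exact no_consec hS p (h ▸ hcL) (hb ▸ hyS) (h ▸ hc ▸ hzS)
  · exact no_consec hS p (h ▸ hbL) (hc ▸ hzS) (h ▸ hb ▸ hyS)

/-- If `G` is connected with `2 ≤ diam(G) ≤ 3`, then `χ_igp(G) = χ(G)`. -/
theorem igpChromatic_eq_chromatic {V : Type*} [Fintype V] (G : SimpleGraph V)
    (hG : G.Connected) (h2 : 2 ≤ G.diam) (h3 : G.diam ≤ 3) :
    (igpChromatic G : ℕ∞) = G.chromaticNumber := by
  have hdiam : G.ediam ≠ ⊤ := G.ediam_ne_top_of_diam_ne_zero (by omega)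
  have hsets : {k | ∃ c : V → Fin k, ∀ i,
      ({v | c v = i} : Set V).Pairwise (fun u w => ¬ G.Adj u w) ∧
        IsGenPosSet G {v | c v = i}} = {k | G.Colorable k} := by
    ext k
    constructor
    · rintro ⟨c, hc⟩
      exact ⟨SimpleGraph.Coloring.mk c fun {u w} hadj huw =>
        (hc (c w)).1 (by simpa using huw) rfl hadj.ne hadj⟩
    · rintro ⟨c⟩
      refine ⟨c, fun i => ⟨?_, ?_⟩⟩
      · intro u hu w hw hne hadj
        exact c.valid hadj (by simp only [Set.mem_setOf_eq] at hu hw; rw [hu, hw])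
      · refine indep_isGenPos hdiam h3 ?_
        intro u hu w hw hne hadj
        exact c.valid hadj (by simp only [Set.mem_setOf_eq] at hu hw; rw [hu, hw])
  rw [igpChromatic, hsets, (G.colorable_of_fintype).chromaticNumber_eq_sInf]
end

section
/- For a ≥ 2 and n ≥ a, the unique graph of order n with χ_igp(G) = a and maximum number of edges is the complete a-partite Turán graph T_a(n). -/
open SimpleGraph

/-!
In `T_a(n)` any two vertices are at distance at most two, so a geodesic has at most three
vertices and two of them are adjacent; hence every independent set is in general position and the
parts of `T_a(n)` form an igp-colouring with `a` colours. Since `T_a(n)` contains an `a`-clique, no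
proper colouring uses fewer. Conversely an igp-colouring is in particular a proper colouring, so a
graph with `χ_igp(G) = a` is `K_{a+1}`-free, and Turán's theorem bounds its edges and identifies the
extremal graph.
-/

namespace SimpleGraph

variable {V : Type*} {G : SimpleGraph V}

theorem isGenPosSet_of_pairwise_not_adj_of_dist_le_two {S : Set V}
    (hS : S.Pairwise fun u w => ¬ G.Adj u w) (hdist : ∀ u v, G.dist u v ≤ 2) :
    IsGenPosSet G S := by
  intro u v p _ hgeo x y z hx hy hz hxp hyp hzp
  match p, hgeo ▸ hdist u v with
  | .nil, _ =>
    simp only [Walk.support_nil, List.mem_singleton] at hxp hyp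
    exact .inl (hxp.trans hyp.symm)
  | .cons _ .nil, _ =>
    simp only [Walk.support_cons, Walk.support_nil, List.mem_cons,
      List.not_mem_nil, or_false] at hxp hyp hzp
    grind
  | .cons (v := b) hub (.cons _ .nil), _ =>
    simp only [Walk.support_cons, Walk.support_nil, List.mem_cons,
      List.not_mem_nil, or_false] at hxp hyp hzp
    by_contra! hne
    have hu : u ∈ S := by grind
    have hb : b ∈ S := by grind
    exact hS hu hb hub.ne hub
  | .cons _ (.cons _ (.cons _ _)), h => simp at h

def IsIgpColoring {k : ℕ} (G : SimpleGraph V) (c : V → Fin k) : Prop :=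
  ∀ i, ({v | c v = i} : Set V).Pairwise (fun u w => ¬ G.Adj u w) ∧ IsGenPosSet G {v | c v = i}

theorem IsIgpColoring.colorable {k : ℕ} {c : V → Fin k} (hc : IsIgpColoring G c) :
    G.Colorable k :=
  ⟨Coloring.mk c fun hadj heq => (hc (c _)).1 rfl heq.symm (G.ne_of_adj hadj) hadj⟩

theorem igpChromatic_le {k : ℕ} {c : V → Fin k} (hc : IsIgpColoring G c) : igpChromatic G ≤ k :=
  Nat.sInf_le ⟨c, hc⟩

theorem exists_isIgpColoring_igpChromatic (h : igpChromatic G ≠ 0) :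
    ∃ c : V → Fin (igpChromatic G), IsIgpColoring G c :=
  Nat.sInf_mem (Nat.nonempty_of_pos_sInf (Nat.pos_of_ne_zero h))

theorem colorable_igpChromatic (h : igpChromatic G ≠ 0) : G.Colorable (igpChromatic G) :=
  (exists_isIgpColoring_igpChromatic h).choose_spec.colorable

theorem le_igpChromatic {m : ℕ} (hm : ∀ k (c : V → Fin k), IsIgpColoring G c → m ≤ k)
    (hne : ∃ k, ∃ c : V → Fin k, IsIgpColoring G c) : m ≤ igpChromatic G :=
  le_csInf hne fun k ⟨c, hc⟩ => hm k c hc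

section Turan

variable [Fintype V] [DecidableRel G.Adj] {r : ℕ}

theorem CliqueFree.card_edgeFinset_le_turanGraph {n : ℕ} (hV : Fintype.card V = n) (hr : 0 < r)
    (h : G.CliqueFree (r + 1)) : G.edgeFinset.card ≤ (turanGraph n r).edgeFinset.card := by
  obtain ⟨H, _, hH⟩ := exists_isTuranMaximal (V := V) hr
  exact hV ▸ (hH.2 h).trans_eq hH.nonempty_iso_turanGraph.some.card_edgeFinset_eq

theorem CliqueFree.nonempty_iso_turanGraph_of_card_edgeFinset_eq {n : ℕ} (hV : Fintype.card V = n)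
    (hr : 0 < r) (h : G.CliqueFree (r + 1))
    (heq : G.edgeFinset.card = (turanGraph n r).edgeFinset.card) :
    Nonempty (G ≃g turanGraph n r) := by
  subst hV
  exact IsTuranMaximal.nonempty_iso_turanGraph
    ⟨h, fun _ _ hH => heq ▸ CliqueFree.card_edgeFinset_le_turanGraph rfl hr hH⟩

end Turan

variable {a n : ℕ}

theorem turanGraph_dist_le_two (ha : 2 ≤ a) (hn : a ≤ n) (u v : Fin n) :
    (turanGraph n a).dist u v ≤ 2 := by
  obtain ⟨w, hw⟩ : ∃ w : Fin n, (w : ℕ) % a ≠ u % a := by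
    by_cases hu : (u : ℕ) % a = 0
    · exact ⟨⟨1, by omega⟩, by rw [Nat.mod_eq_of_lt (by omega : 1 < a), hu]; omega⟩
    · exact ⟨⟨0, by omega⟩, by rw [Nat.zero_mod]; exact Ne.symm hu⟩
  by_cases huv : (u : ℕ) % a = v % a
  · have huw : (turanGraph n a).Adj u w := turanGraph_adj.2 (Ne.symm hw)
    have hwv : (turanGraph n a).Adj w v := turanGraph_adj.2 (huv ▸ hw)
    exact (dist_le (.cons huw hwv.toWalk)).trans (by simp)
  · exact (dist_le (turanGraph_adj.2 huv).toWalk).trans (by simp)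

theorem isIgpColoring_turanGraph (ha : 2 ≤ a) (hn : a ≤ n) :
    IsIgpColoring (turanGraph n a) fun v => (⟨v % a, Nat.mod_lt _ (by omega)⟩ : Fin a) := by
  intro i
  have hindep : ({v | (⟨v % a, Nat.mod_lt _ (by omega)⟩ : Fin a) = i} : Set (Fin n)).Pairwise
      fun u w => ¬ (turanGraph n a).Adj u w := by
    intro u hu w hw _ hadj
    simp only [Set.mem_ofPred_eq, Fin.ext_iff] at hu hw
    exact turanGraph_adj.1 hadj (hu.trans hw.symm)
  exact ⟨hindep,
    isGenPosSet_of_pairwise_not_adj_of_dist_le_two hindep (turanGraph_dist_le_two ha hn)⟩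

theorem le_of_colorable_turanGraph {k : ℕ} (hn : a ≤ n) (h : (turanGraph n a).Colorable k) :
    a ≤ k := by
  simpa using h.card_le_of_pairwise_adj (Fin.castLE hn) fun i j hij =>
    turanGraph_adj.2 (by simpa [Nat.mod_eq_of_lt i.2, Nat.mod_eq_of_lt j.2, Fin.val_inj] using hij)

theorem igpChromatic_turanGraph (ha : 2 ≤ a) (hn : a ≤ n) : igpChromatic (turanGraph n a) = a :=
  le_antisymm (igpChromatic_le (isIgpColoring_turanGraph ha hn))
    (le_igpChromatic (fun _ _ hc => le_of_colorable_turanGraph hn hc.colorable)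
      ⟨a, _, isIgpColoring_turanGraph ha hn⟩)

end SimpleGraph

/-- For `a ≥ 2` and `n ≥ a`, the unique graph of order `n` with `χ_igp = a` and the
maximum number of edges is the Turán graph `T_a(n)`. -/
theorem igp_turan_extremal (a n : ℕ) (ha : 2 ≤ a) (hn : a ≤ n) :
    igpChromatic (turanGraph n a) = a ∧
      ∀ G : SimpleGraph (Fin n), igpChromatic G = a →
        G.edgeSet.ncard ≤ (turanGraph n a).edgeSet.ncard ∧
          (G.edgeSet.ncard = (turanGraph n a).edgeSet.ncard →
            Nonempty (G ≃g turanGraph n a)) := by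
  classical
  refine ⟨igpChromatic_turanGraph ha hn, fun G hG => ?_⟩
  have hcf : G.CliqueFree (a + 1) :=
    (hG ▸ colorable_igpChromatic (by omega)).cliqueFree a.lt_succ_self
  rw [← coe_edgeFinset G, ← coe_edgeFinset (turanGraph n a), Set.ncard_coe_finset,
    Set.ncard_coe_finset]
  exact ⟨hcf.card_edgeFinset_le_turanGraph (Fintype.card_fin n) (by omega),
    hcf.nonempty_iso_turanGraph_of_card_edgeFinset_eq (Fintype.card_fin n) (by omega)⟩
end

section
/- For n ≥ 3, the gp-chromatic number of the Cartesian product P_2 □ P_n equals 2r if n = 3r, equals 2r+1 if n = 3r+1, and equals 2r+2 if n = 3r+2. -/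
open SimpleGraph

/-!
In `P₂ □ Pₙ` a vertex `y` lies on a geodesic from `x` to `z` as soon as its column lies between
theirs and it shares a row with one of them. In a general position set, take `x` of least column
and `z` of greatest column among the rest: every further vertex avoids the row of `x`, and two
such vertices `y`, `y'` with `y` left of `y'` put `y` between `x` and `y'`. So general position
sets have at most three vertices, and `3 χ_gp ≥ 2n`. Conversely, cutting the columns into blocks
of three and colouring each block with two colours in a chessboard pattern makes every colour
class three vertices at pairwise distance `2`, which gives `⌈2n/3⌉` colours once the leftover
columns are absorbed into the last colour.
-/

open Finset

namespace SimpleGraph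

variable {V : Type*} {G : SimpleGraph V} {u v x y : V}

theorem Walk.dist_add_dist_of_mem_support_dropUntil [DecidableEq V] {p : G.Walk u v}
    (hp : p.length = G.dist u v) (hx : x ∈ p.support) (hy : y ∈ (p.dropUntil x hx).support) :
    G.dist u x + G.dist x y = G.dist u y := by
  set q := p.dropUntil x hx
  have hq : q.length = G.dist x v := length_eq_dist_of_subwalk hp (p.isSubwalk_dropUntil hx)
  have hprefix : ((p.takeUntil x hx).append (q.takeUntil y hy)).IsSubwalk p :=
    Walk.isSubwalk_of_append_left (p₂ := q.dropUntil y hy) <| by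
      rw [← Walk.append_assoc, q.take_spec hy, p.take_spec hx]
  rw [← length_eq_dist_of_subwalk hp (p.isSubwalk_takeUntil hx),
    ← length_eq_dist_of_subwalk hq (q.isSubwalk_takeUntil hy),
    ← length_eq_dist_of_subwalk hp hprefix, Walk.length_append]

theorem Walk.dist_add_dist_or_of_length_eq_dist {p : G.Walk u v}
    (hp : p.length = G.dist u v) (hx : x ∈ p.support) (hy : y ∈ p.support) :
    G.dist u x + G.dist x y = G.dist u y ∨ G.dist u y + G.dist y x = G.dist u x := by
  classical
  rw [← p.take_spec hx, Walk.mem_support_append_iff] at hy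
  rcases hy with hy | hy
  · have ht : (p.takeUntil x hx).length = G.dist u x :=
      length_eq_dist_of_subwalk hp (p.isSubwalk_takeUntil hx)
    exact .inr (Walk.dist_add_dist_of_mem_support_dropUntil ht hy (Walk.end_mem_support _))
  · exact .inl (Walk.dist_add_dist_of_mem_support_dropUntil hp hx hy)

theorem dist_boxProd {α β : Type*} {G : SimpleGraph α} {H : SimpleGraph β}
    (hG : G.Preconnected) (hH : H.Preconnected) (x y : α × β) :
    (G □ H).dist x y = G.dist x.1 y.1 + H.dist x.2 y.2 := by
  have h := edist_boxProd (G := G) (H := H) x y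
  rw [← ((hG.boxProd hH) x y).coe_dist_eq_edist, ← (hG x.1 y.1).coe_dist_eq_edist,
    ← (hH x.2 y.2).coe_dist_eq_edist] at h
  exact_mod_cast h

variable {n : ℕ}

theorem pathGraph_natDist_le_length {i j : Fin n} (w : (pathGraph n).Walk i j) :
    Nat.dist i j ≤ w.length := by
  induction w with
  | nil => simp
  | cons h _ ih =>
    rw [pathGraph_adj] at h
    rw [Walk.length_cons]
    unfold Nat.dist at *
    omega

theorem pathGraph_dist_le_natDist (i j : Fin n) : (pathGraph n).dist i j ≤ Nat.dist i j := by
  induction h : Nat.dist i j generalizing i with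
  | zero => simp [Fin.ext (Nat.eq_of_dist_eq_zero h)]
  | succ k ih =>
    obtain ⟨i', hadj, hi'⟩ : ∃ i', (pathGraph n).Adj i i' ∧ Nat.dist i' j = k := by
      unfold Nat.dist at h
      rcases lt_or_gt_of_ne (show (i : ℕ) ≠ j by omega) with hij | hij
      · exact ⟨⟨i + 1, by omega⟩, pathGraph_adj.mpr (.inl rfl), by unfold Nat.dist; simp; omega⟩
      · exact ⟨⟨i - 1, by omega⟩, pathGraph_adj.mpr (.inr (by simp; omega)),
          by unfold Nat.dist; simp; omega⟩
    calc (pathGraph n).dist i j ≤ (pathGraph n).dist i i' + (pathGraph n).dist i' j :=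
          (pathGraph_preconnected n i i').dist_triangle_left j
      _ ≤ k + 1 := by rw [dist_eq_one_iff_adj.mpr hadj]; have := ih i' hi'; omega

theorem pathGraph_dist (i j : Fin n) : (pathGraph n).dist i j = Nat.dist i j := by
  obtain ⟨w, hw⟩ := (pathGraph_preconnected n i j).exists_walk_length_eq_dist
  exact (pathGraph_dist_le_natDist i j).antisymm (hw ▸ pathGraph_natDist_le_length w)

theorem pathGraph_boxProd_dist {m : ℕ} (x y : Fin m × Fin n) :
    (pathGraph m □ pathGraph n).dist x y = Nat.dist x.1 y.1 + Nat.dist x.2 y.2 := by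
  rw [dist_boxProd (pathGraph_preconnected m) (pathGraph_preconnected n), pathGraph_dist,
    pathGraph_dist]

end SimpleGraph

section GenPos

variable {V : Type*} {G : SimpleGraph V} {S : Set V}

theorem IsGenPosSet.of_forall_dist_add_dist_ne
    (h : ∀ x ∈ S, ∀ y ∈ S, ∀ z ∈ S, x ≠ y → y ≠ z → x ≠ z →
      G.dist x y + G.dist y z ≠ G.dist x z) :
    IsGenPosSet G S := by
  intro u v p _ hp x y z hx hy hz hxp hyp hzp
  -- on a geodesic from `u` distances are differences of distances from `u`, so one of the
  -- three points lies between the other two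
  by_contra! hne
  obtain ⟨hxy, hyz, hxz⟩ := hne
  have := p.dist_add_dist_or_of_length_eq_dist hp hxp hyp
  have := p.dist_add_dist_or_of_length_eq_dist hp hyp hzp
  have := p.dist_add_dist_or_of_length_eq_dist hp hxp hzp
  have := h x hx y hy z hz hxy hyz hxz
  have := h y hy x hx z hz hxy.symm hxz hyz
  have := h x hx z hz y hy hxz hyz.symm hxy
  simp only [G.dist_comm (u := y) (v := x), G.dist_comm (u := z) (v := y),
    G.dist_comm (u := z) (v := x)] at *
  omega

theorem IsGenPosSet.dist_add_dist_ne (hS : IsGenPosSet G S) (hG : G.Connected)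
    {x y z : V} (hx : x ∈ S) (hy : y ∈ S) (hz : z ∈ S) (hxy : x ≠ y) (hyz : y ≠ z)
    (hxz : x ≠ z) : G.dist x y + G.dist y z ≠ G.dist x z := by
  intro hsum
  obtain ⟨p, hp⟩ := hG.exists_walk_length_eq_dist x y
  obtain ⟨q, hq⟩ := hG.exists_walk_length_eq_dist y z
  have hpq : (p.append q).length = G.dist x z := by rw [Walk.length_append, hp, hq, hsum]
  have hy' : y ∈ (p.append q).support :=
    (Walk.mem_support_append_iff _ _).mpr (.inl p.end_mem_support)
  have := hS (p.append q) ((p.append q).isPath_of_length_eq_dist hpq) hpq x y z hx hy hz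
    (p.append q).start_mem_support hy' (p.append q).end_mem_support
  tauto

theorem IsGenPosSet.of_dist_eq {d : ℕ} (hd : d ≠ 0)
    (h : ∀ x ∈ S, ∀ y ∈ S, x ≠ y → G.dist x y = d) : IsGenPosSet G S :=
  IsGenPosSet.of_forall_dist_add_dist_ne fun x hx y hy z hz hxy hyz hxz ↦ by
    rw [h x hx y hy hxy, h y hy z hz hyz, h x hx z hz hxz]
    omega

theorem GpColorable.card_le_mul [Fintype V] {m k : ℕ}
    (hm : ∀ S : Finset V, IsGenPosSet G S → #S ≤ m) (h : GpColorable G k) :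
    Fintype.card V ≤ m * k := by
  classical
  obtain ⟨c, hc⟩ := h
  simpa using card_le_mul_card_image_of_maps_to (s := univ) (t := univ) (f := c)
    (fun _ _ ↦ mem_univ _) m (fun i _ ↦ hm _ (by simpa using hc i))

end GenPos

section Grid

variable {n : ℕ}

theorem pathGraph_two_boxProd_connected (hn : 0 < n) : (pathGraph 2 □ pathGraph n).Connected :=
  (pathGraph_connected 1).boxProd (Nat.succ_pred_eq_of_pos hn ▸ pathGraph_connected (n - 1))

theorem pathGraph_two_boxProd_dist_add_dist_eq {x y z : Fin 2 × Fin n} (hxy : x.2 ≤ y.2)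
    (hyz : y.2 ≤ z.2) (hrow : y.1 = x.1 ∨ y.1 = z.1) :
    (pathGraph 2 □ pathGraph n).dist x y + (pathGraph 2 □ pathGraph n).dist y z =
      (pathGraph 2 □ pathGraph n).dist x z := by
  simp only [pathGraph_boxProd_dist, Nat.dist, Fin.le_def, Fin.ext_iff] at *
  omega

theorem IsGenPosSet.card_le_three_of_pathGraph_two_boxProd {S : Finset (Fin 2 × Fin n)}
    (hS : IsGenPosSet (pathGraph 2 □ pathGraph n) S) : #S ≤ 3 := by
  by_contra! hS4
  obtain ⟨x, hx, hx_min⟩ := S.exists_min_image (·.2) (card_pos.mp (by omega))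
  obtain ⟨z, hz, hz_max⟩ := (S.erase x).exists_max_image (·.2) (card_pos.mp (by
    rw [card_erase_of_mem hx]; omega))
  obtain ⟨y, hy, y', hy', hyy'⟩ := one_lt_card.mp (show 1 < #((S.erase x).erase z) by
    rw [card_erase_of_mem hz, card_erase_of_mem hx]; omega)
  have hconn := pathGraph_two_boxProd_connected (Fin.pos x.2)
  have not_between {a b c : Fin 2 × Fin n} (ha : a ∈ S) (hb : b ∈ S) (hc : c ∈ S)
      (hab : a ≠ b) (hbc : b ≠ c) (hac : a ≠ c) (h₁ : a.2 ≤ b.2) (h₂ : b.2 ≤ c.2) :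
      b.1 ≠ a.1 ∧ b.1 ≠ c.1 := by
    rw [← not_or]
    exact fun hrow ↦ hS.dist_add_dist_ne hconn ha hb hc hab hbc hac
      (pathGraph_two_boxProd_dist_add_dist_eq h₁ h₂ hrow)
  have hzS : z ∈ S := mem_of_mem_erase hz
  have hxz : x ≠ z := (ne_of_mem_erase hz).symm
  have mem_rest {w} (hw : w ∈ (S.erase x).erase z) : w ∈ S ∧ w ≠ x ∧ x.2 ≤ w.2 := by
    obtain ⟨-, hw⟩ := mem_erase.mp hw
    obtain ⟨hwx, hw⟩ := mem_erase.mp hw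
    exact ⟨hw, hwx, hx_min w hw⟩
  have other_row {w} (hw : w ∈ (S.erase x).erase z) : w.1 ≠ x.1 := by
    obtain ⟨hwS, hwx, hxw⟩ := mem_rest hw
    exact (not_between hx hwS hzS hwx.symm (ne_of_mem_erase hw) hxz hxw
      (hz_max w (mem_of_mem_erase hw))).1
  have hrow : y.1 = y'.1 := by
    have := other_row hy; have := other_row hy'; omega
  obtain ⟨hyS, hyx, hxy⟩ := mem_rest hy
  obtain ⟨hy'S, hy'x, hxy'⟩ := mem_rest hy'
  rcases le_total y.2 y'.2 with h | h
  · exact (not_between hx hyS hy'S hyx.symm hyy' hy'x.symm hxy h).2 hrow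
  · exact (not_between hx hy'S hyS hy'x.symm hyy'.symm hyx.symm hxy' h).2 hrow.symm

/-- Column `b` lies in the block `b / 3` of three columns, which carries the two colours
`2 * (b / 3)` and `2 * (b / 3) + 1` in a chessboard pattern. -/
def blockColor (v : Fin 2 × Fin n) : ℕ := 2 * (v.2 / 3) + (v.1 + v.2) % 2

/-- Colours beyond the last one are merged into it; for `n = 3r + 1` this makes the last column
one colour class. -/
def blockGpColoring (n : ℕ) (v : Fin 2 × Fin n) : Fin ((2 * n + 2) / 3) :=
  ⟨min (blockColor v) ((2 * n + 2) / 3 - 1), by have := v.2.isLt; unfold blockColor; omega⟩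

theorem dist_eq_two_of_blockColor_eq {x y : Fin 2 × Fin n} (hxy : x ≠ y)
    (h : blockColor x = blockColor y) : (pathGraph 2 □ pathGraph n).dist x y = 2 := by
  simp only [blockColor, pathGraph_boxProd_dist, Nat.dist, ne_eq, Prod.ext_iff, Fin.ext_iff]
    at *
  omega

theorem dist_eq_one_of_blockColor_ge (hn : n % 3 = 1) {x y : Fin 2 × Fin n} (hxy : x ≠ y)
    (hx : (2 * n + 2) / 3 - 1 ≤ blockColor x) (hy : (2 * n + 2) / 3 - 1 ≤ blockColor y) :
    (pathGraph 2 □ pathGraph n).dist x y = 1 := by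
  simp only [blockColor, pathGraph_boxProd_dist, Nat.dist, ne_eq, Prod.ext_iff, Fin.ext_iff]
    at *
  omega

theorem pathGraph_two_boxProd_gpColorable :
    GpColorable (pathGraph 2 □ pathGraph n) ((2 * n + 2) / 3) := by
  refine ⟨blockGpColoring n, fun i ↦ ?_⟩
  by_cases hi : n % 3 = 1 ∧ i + 1 = (2 * n + 2) / 3
  · refine IsGenPosSet.of_dist_eq one_ne_zero fun x hx y hy hxy ↦ ?_
    simp only [Set.mem_ofPred_eq, blockGpColoring, Fin.ext_iff] at hx hy
    exact dist_eq_one_of_blockColor_ge hi.1 hxy (by omega) (by omega)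
  · refine IsGenPosSet.of_dist_eq two_ne_zero fun x hx y hy hxy ↦ ?_
    simp only [Set.mem_ofPred_eq, blockGpColoring, Fin.ext_iff] at hx hy
    have := x.2.isLt; have := y.2.isLt
    exact dist_eq_two_of_blockColor_eq hxy (by unfold blockColor at *; omega)

end Grid

theorem gpChromatic_pathGraph_two_boxProd (n : ℕ) :
    gpChromatic (pathGraph 2 □ pathGraph n) = (2 * n + 2) / 3 := by
  refine IsLeast.csInf_eq ⟨pathGraph_two_boxProd_gpColorable, fun k hk ↦ ?_⟩
  have := hk.card_le_mul fun S hS ↦ hS.card_le_three_of_pathGraph_two_boxProd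
  simp only [Fintype.card_prod, Fintype.card_fin] at this
  omega

theorem gpChromatic_P2_boxProd_Pn_general (n : ℕ) (r : ℕ) :
    (n = 3 * r → gpChromatic (pathGraph 2 □ pathGraph n) = 2 * r) ∧
      (n = 3 * r + 1 → gpChromatic (pathGraph 2 □ pathGraph n) = 2 * r + 1) ∧
      (n = 3 * r + 2 → gpChromatic (pathGraph 2 □ pathGraph n) = 2 * r + 2) := by
  refine ⟨?_, ?_, ?_⟩ <;> rintro rfl <;> rw [gpChromatic_pathGraph_two_boxProd] <;> omega

/-- For `n ≥ 3`, `χ_gp(P₂ □ P_n)` equals `2r`, `2r+1`, `2r+2` according as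
`n = 3r`, `3r+1`, `3r+2`. -/
theorem gpChromatic_P2_boxProd_Pn (n : ℕ) (hn : 3 ≤ n) (r : ℕ) :
    (n = 3 * r → gpChromatic (pathGraph 2 □ pathGraph n) = 2 * r) ∧
      (n = 3 * r + 1 → gpChromatic (pathGraph 2 □ pathGraph n) = 2 * r + 1) ∧
      (n = 3 * r + 2 → gpChromatic (pathGraph 2 □ pathGraph n) = 2 * r + 2) :=
  gpChromatic_P2_boxProd_Pn_general n r
end

section
/- For 2 ≤ m ≤ n, the mutual-visibility chromatic number of the strong grid P_m ⊠ P_n equals ⌈m/2⌉ if m ≥ 3, and equals 2 if m = 2 (and n ≥ 3). -/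
open SimpleGraph

/-- The strong product of two simple graphs. -/
def strongProd {α β : Type*} (G : SimpleGraph α) (H : SimpleGraph β) :
    SimpleGraph (α × β) where
  Adj x y := x ≠ y ∧ (x.1 = y.1 ∨ G.Adj x.1 y.1) ∧ (x.2 = y.2 ∨ H.Adj x.2 y.2)
  symm := by
    refine ⟨?_⟩
    rintro ⟨a, b⟩ ⟨c, d⟩ ⟨hne, h1, h2⟩
    refine ⟨hne.symm, ?_, ?_⟩
    · rcases h1 with h | h
      · exact Or.inl h.symm
      · exact Or.inr h.symm
    · rcases h2 with h | h
      · exact Or.inl h.symm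
      · exact Or.inr h.symm
  loopless := by refine ⟨?_⟩; rintro ⟨a, b⟩ ⟨hne, -, -⟩; exact hne rfl

/-- `S` is a mutual-visibility set: any two of its vertices are joined by some shortest
path avoiding the rest of `S`. -/
def IsMutualVisSet {V : Type*} (G : SimpleGraph V) (S : Set V) : Prop :=
  ∀ u ∈ S, ∀ v ∈ S, u ≠ v → ∃ p : G.Walk u v, p.IsPath ∧ p.length = G.dist u v ∧
    ∀ x ∈ p.support, x ∈ S → x = u ∨ x = v

/-- The mutual-visibility chromatic number. -/
noncomputable def muChromatic {V : Type*} (G : SimpleGraph V) : ℕ :=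
  sInf {k | ∃ c : V → Fin k, ∀ i, IsMutualVisSet G {v | c v = i}}

/-!
Colour row `i` by `i mod K` with `K = max 2 ⌈m/2⌉`; since `m ≤ 2K`, a colour class consists of at
most two rows `r` and `r + K`. Two vertices of row `r` see each other along a shortest path running
in a neighbouring row; vertices of rows `r` and `r + K` see each other along a shortest path whose
inner vertices lie strictly between these rows, which is possible because such a path may climb
one row per step. Conversely, rows and columns are `1`-Lipschitz along walks, so a shortest path
from `(i, i)` to `(l, l)` passes through every `(j, j)` in between: a colour class contains at most
two of the `m` diagonal vertices. For `m = 2` one colour is too few, as `(0, 0)` and `(0, 2)` are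
at distance `2`.
-/

namespace SimpleGraph

variable {V : Type*} {G : SimpleGraph V} {S : Set V} {u v : V}

/-- The paper's "`u` and `v` are `S`-visible". -/
def Visible (G : SimpleGraph V) (S : Set V) (u v : V) : Prop :=
  ∃ p : G.Walk u v, p.IsPath ∧ p.length = G.dist u v ∧ ∀ x ∈ p.support, x ∈ S → x = u ∨ x = v

lemma Visible.symm (h : G.Visible S u v) : G.Visible S v u := by
  obtain ⟨p, hp, hlen, hS⟩ := h
  refine ⟨p.reverse, hp.reverse, by rw [Walk.length_reverse, hlen, dist_comm], fun x hx hxS ↦ ?_⟩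
  exact (hS x (by simpa using hx) hxS).symm

lemma Visible.dist_le_one_of_univ (h : G.Visible Set.univ u v) : G.dist u v ≤ 1 := by
  obtain ⟨p, hp, hlen, hS⟩ := h
  by_contra! hlong
  rcases hS (p.getVert 1) (p.getVert_mem_support 1) trivial with h | h
  · have := (hp.getVert_eq_start_iff (by omega)).1 h
    omega
  · have := (hp.getVert_eq_end_iff (by omega)).1 h
    omega

lemma Walk.apply_le_apply_add_length_s19 (f : V → ℕ) (hf : ∀ x y, G.Adj x y → f y ≤ f x + 1)
    (p : G.Walk u v) : f v ≤ f u + p.length := by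
  induction p with
  | nil => simp
  | cons h _ ih =>
    have := hf _ _ h
    rw [Walk.length_cons]
    omega

lemma Walk.apply_getVert_of_apply_eq (f : V → ℕ) (hf : ∀ x y, G.Adj x y → f y ≤ f x + 1)
    (p : G.Walk u v) (hp : f v = f u + p.length) {d : ℕ} (hd : d ≤ p.length) :
    f (p.getVert d) = f u + d := by
  have hpre := (p.take d).apply_le_apply_add_length_s19 f hf
  have hsuf := (p.drop d).apply_le_apply_add_length_s19 f hf
  rw [Walk.take_length, inf_of_le_left hd] at hpre
  rw [Walk.drop_length] at hsuf
  omega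

lemma Reachable.apply_le_apply_add_dist (f : V → ℕ) (hf : ∀ x y, G.Adj x y → f y ≤ f x + 1)
    (h : G.Reachable u v) : f v ≤ f u + G.dist u v := by
  obtain ⟨p, hp⟩ := h.exists_walk_length_eq_dist
  simpa [hp] using p.apply_le_apply_add_length_s19 f hf

lemma exists_walk_of_chain (f : ℕ → V) (L : ℕ)
    (hf : ∀ s < L, f s = f (s + 1) ∨ G.Adj (f s) (f (s + 1))) :
    ∃ p : G.Walk (f 0) (f L), p.length ≤ L ∧ ∀ x ∈ p.support, ∃ s ≤ L, f s = x := by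
  induction L with
  | zero => exact ⟨Walk.nil, le_rfl, by simp⟩
  | succ L ih =>
    obtain ⟨p, hlen, hsupp⟩ := ih fun s hs ↦ hf s (by omega)
    have hsupp' : ∀ x ∈ p.support, ∃ s ≤ L + 1, f s = x := fun x hx ↦
      (hsupp x hx).imp fun s hs ↦ ⟨by omega, hs.2⟩
    rcases hf L (by omega) with heq | hadj
    · exact ⟨p.copy rfl heq, by rw [Walk.length_copy]; omega, by simpa using hsupp'⟩
    · refine ⟨p.concat hadj, by rw [Walk.length_concat]; omega, fun x hx ↦ ?_⟩
      rw [Walk.support_concat, List.mem_append, List.mem_singleton] at hx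
      rcases hx with hx | rfl
      exacts [hsupp' x hx, ⟨L + 1, le_rfl, rfl⟩]

lemma visible_of_chain (f : ℕ → V) (L : ℕ)
    (hf : ∀ s < L, f s = f (s + 1) ∨ G.Adj (f s) (f (s + 1)))
    (hu : f 0 = u) (hv : f L = v) (hL : L ≤ G.dist u v)
    (hS : ∀ s, 0 < s → s < L → f s ∉ S) : G.Visible S u v := by
  subst hu hv
  obtain ⟨p, hlen, hsupp⟩ := exists_walk_of_chain f L hf
  have hdist : p.length = G.dist (f 0) (f L) := le_antisymm (hlen.trans hL) (dist_le p)
  refine ⟨p, p.isPath_of_length_eq_dist hdist, hdist, fun x hx hxS ↦ ?_⟩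
  obtain ⟨s, hs, rfl⟩ := hsupp x hx
  rcases Nat.eq_zero_or_pos s with rfl | hs0
  · exact Or.inl rfl
  rcases hs.lt_or_eq with hsL | rfl
  · exact absurd hxS (hS s hs0 hsL)
  · exact Or.inr rfl

end SimpleGraph

lemma Fintype.card_le_two_mul_of_not_lt_lt {α β : Type*} [LinearOrder α] [Fintype α] [Fintype β]
    [DecidableEq β] (f : α → β) (h : ∀ a b c, a < b → b < c → f a = f b → f b ≠ f c) :
    Fintype.card α ≤ 2 * Fintype.card β := by
  refine Finset.card_le_mul_card_image_of_maps_to (fun a _ ↦ Finset.mem_univ (f a)) 2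
    fun y _ ↦ ?_
  by_contra! hcard
  set e := Finset.orderEmbOfCardLe _ hcard
  have hmem := Finset.orderEmbOfCardLe_mem _ hcard
  simp only [Finset.mem_filter, Finset.mem_univ, true_and] at hmem
  exact h (e 0) (e 1) (e 2) (e.strictMono (by decide)) (e.strictMono (by decide))
    ((hmem 0).trans (hmem 1).symm) ((hmem 1).trans (hmem 2).symm)

lemma boxProd_le_strongProd {α β : Type*} (G : SimpleGraph α) (H : SimpleGraph β) :
    G.boxProd H ≤ strongProd G H := by
  rintro x y (⟨hG, h2⟩ | ⟨hH, h1⟩)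
  · exact ⟨fun h ↦ hG.ne (congrArg Prod.fst h), Or.inr hG, Or.inl h2⟩
  · exact ⟨fun h ↦ hH.ne (congrArg Prod.snd h), Or.inl h1, Or.inr hH⟩

abbrev strongGrid (m n : ℕ) : SimpleGraph (Fin m × Fin n) :=
  strongProd (pathGraph m) (pathGraph n)

namespace strongGrid

variable {m n : ℕ}

lemma adj_iff {x y : Fin m × Fin n} :
    (strongGrid m n).Adj x y ↔ x ≠ y ∧ (x.1 : ℕ) ≤ y.1 + 1 ∧ (y.1 : ℕ) ≤ x.1 + 1 ∧
      (x.2 : ℕ) ≤ y.2 + 1 ∧ (y.2 : ℕ) ≤ x.2 + 1 := by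
  simp only [strongGrid, strongProd, pathGraph_adj, Ne, Prod.ext_iff, Fin.ext_iff]
  omega

lemma eq_or_adj {x y : Fin m × Fin n} (h1 : (x.1 : ℕ) ≤ y.1 + 1) (h1' : (y.1 : ℕ) ≤ x.1 + 1)
    (h2 : (x.2 : ℕ) ≤ y.2 + 1) (h2' : (y.2 : ℕ) ≤ x.2 + 1) : x = y ∨ (strongGrid m n).Adj x y := by
  rw [adj_iff]
  tauto

lemma preconnected : (strongGrid m n).Preconnected :=
  ((pathGraph_preconnected m).boxProd (pathGraph_preconnected n)).mono
    (boxProd_le_strongProd _ _)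

lemma fst_le_of_adj (x y : Fin m × Fin n) (h : (strongGrid m n).Adj x y) :
    (y.1 : ℕ) ≤ x.1 + 1 :=
  (adj_iff.1 h).2.2.1

lemma snd_le_of_adj (x y : Fin m × Fin n) (h : (strongGrid m n).Adj x y) :
    (y.2 : ℕ) ≤ x.2 + 1 :=
  (adj_iff.1 h).2.2.2.2

lemma le_add_dist (u v : Fin m × Fin n) :
    (v.1 : ℕ) ≤ u.1 + (strongGrid m n).dist u v ∧ (u.1 : ℕ) ≤ v.1 + (strongGrid m n).dist u v ∧
      (v.2 : ℕ) ≤ u.2 + (strongGrid m n).dist u v ∧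
        (u.2 : ℕ) ≤ v.2 + (strongGrid m n).dist u v := by
  have fst (x y : Fin m × Fin n) : (y.1 : ℕ) ≤ x.1 + (strongGrid m n).dist x y :=
    (preconnected x y).apply_le_apply_add_dist _ fst_le_of_adj
  have snd (x y : Fin m × Fin n) : (y.2 : ℕ) ≤ x.2 + (strongGrid m n).dist x y :=
    (preconnected x y).apply_le_apply_add_dist _ snd_le_of_adj
  exact ⟨fst u v, dist_comm (G := strongGrid m n) ▸ fst v u, snd u v,
    dist_comm (G := strongGrid m n) ▸ snd v u⟩

lemma visible_of_fst_eq {S : Set (Fin m × Fin n)} {u v : Fin m × Fin n} (w : Fin m)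
    (hw : (w : ℕ) + 1 = u.1 ∨ (u.1 : ℕ) + 1 = w) (hwS : ∀ x ∈ S, x.1 ≠ w)
    (h1 : u.1 = v.1) (h2 : (u.2 : ℕ) < v.2) : (strongGrid m n).Visible S u v := by
  have := v.2.isLt
  -- Step into row `w` at once, advance one column per step, and step back at the end.
  let f : ℕ → Fin m × Fin n := fun s ↦
    (if s = 0 ∨ s = v.2 - u.2 then u.1 else w, ⟨min (u.2 + s) v.2, by omega⟩)
  refine visible_of_chain f (v.2 - u.2) (fun s hs ↦ eq_or_adj ?_ ?_ ?_ ?_) ?_ ?_ ?_ ?_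
  all_goals try (simp only [f]; (try split_ifs) <;> omega)
  · refine Prod.ext (by simp [f]) (Fin.ext ?_)
    simp only [f]
    omega
  · refine Prod.ext (by simp [f, h1]) (Fin.ext ?_)
    simp only [f]
    omega
  · have := (le_add_dist u v).2.2.1
    omega
  · intro s hs0 hsL hs
    exact hwS _ hs (by simp only [f]; rw [if_neg (by omega)])

lemma visible_of_fst_add_two_le {S : Set (Fin m × Fin n)} {u v : Fin m × Fin n}
    (huv : (u.1 : ℕ) + 2 ≤ v.1) (hS : ∀ x ∈ S, ¬((u.1 : ℕ) < x.1 ∧ (x.1 : ℕ) < v.1)) :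
    (strongGrid m n).Visible S u v := by
  have := v.1.isLt
  have := u.2.isLt
  have := v.2.isLt
  set L := max (v.1 - u.1 : ℕ) (max (v.2 - u.2 : ℕ) (u.2 - v.2))
  -- Climb one row per step up to row `v.1 - 1` while moving the column towards `v.2`;
  -- only the last step enters row `v.1`.
  let f : ℕ → Fin m × Fin n := fun s ↦
    (⟨if s = L then v.1 else min (u.1 + s) (v.1 - 1), by split_ifs <;> omega⟩,
     ⟨if (u.2 : ℕ) ≤ v.2 then min (u.2 + s) v.2 else max (u.2 - s) v.2, by split_ifs <;> omega⟩)
  refine visible_of_chain f L (fun s hs ↦ eq_or_adj ?_ ?_ ?_ ?_) ?_ ?_ ?_ ?_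
  all_goals try (simp only [f]; split_ifs <;> omega)
  · refine Prod.ext (Fin.ext ?_) (Fin.ext ?_) <;> simp only [f] <;> split_ifs <;> omega
  · refine Prod.ext (Fin.ext ?_) (Fin.ext ?_) <;> simp only [f] <;> split_ifs <;> omega
  · have := le_add_dist u v
    omega
  · intro s hs0 hsL hs
    refine hS _ hs ?_
    simp only [f]
    split_ifs <;> omega

lemma isMutualVisSet_fst_mod (hm : 2 ≤ m) {K : ℕ} (hK : 2 ≤ K) (hmK : m ≤ 2 * K) (t : ℕ) :
    IsMutualVisSet (strongGrid m n) {x | (x.1 : ℕ) % K = t} := by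
  intro u hu v hv huv
  wlog h : (u.1 : ℕ) < v.1 ∨ ((u.1 : ℕ) = v.1 ∧ (u.2 : ℕ) < v.2) generalizing u v
  · refine Visible.symm (this v hv u hu huv.symm ?_)
    simp only [Ne, Prod.ext_iff, Fin.ext_iff] at huv
    omega
  have hmod : (u.1 : ℕ) ≡ v.1 [MOD K] := hu.trans hv.symm
  rcases h with hlt | ⟨heq, hlt⟩
  · have hband : (u.1 : ℕ) + K = v.1 :=
      Nat.ModEq.eq_of_abs_lt ((Nat.add_mod_right _ _).trans hmod) (by rw [abs_lt]; omega)
    refine visible_of_fst_add_two_le (by omega) fun x hx ⟨h1, h2⟩ ↦ ?_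
    have : (u.1 : ℕ) = x.1 := Nat.ModEq.eq_of_abs_lt (hu.trans hx.symm) (by rw [abs_lt]; omega)
    omega
  · obtain ⟨w, hw⟩ : ∃ w : Fin m, (w : ℕ) + 1 = u.1 ∨ (u.1 : ℕ) + 1 = w :=
      if h : (u.1 : ℕ) + 1 < m then ⟨⟨u.1 + 1, h⟩, Or.inr rfl⟩
      else ⟨⟨u.1 - 1, by omega⟩, Or.inl (by simp only; omega)⟩
    refine visible_of_fst_eq w hw (fun x hx hxw ↦ ?_) (Fin.ext heq) hlt
    have : (u.1 : ℕ) = x.1 := Nat.ModEq.eq_of_abs_lt (hu.trans hx.symm) (by rw [abs_lt, hxw]; omega)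
    rw [hxw] at this
    omega

lemma exists_coloring (hm : 2 ≤ m) {K : ℕ} (hK : 2 ≤ K) (hmK : m ≤ 2 * K) :
    ∃ c : Fin m × Fin n → Fin K, ∀ i, IsMutualVisSet (strongGrid m n) {x | c x = i} :=
  ⟨fun x ↦ ⟨x.1 % K, Nat.mod_lt _ (by omega)⟩, fun i ↦ by
    simpa only [Fin.ext_iff] using isMutualVisSet_fst_mod (n := n) hm hK hmK i⟩

lemma getVert_of_length_eq {u v : Fin m × Fin n} (p : (strongGrid m n).Walk u v)
    (h1 : (v.1 : ℕ) = u.1 + p.length) (h2 : (v.2 : ℕ) = u.2 + p.length) {d : ℕ}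
    (hd : d ≤ p.length) : ((p.getVert d).1 : ℕ) = u.1 + d ∧ ((p.getVert d).2 : ℕ) = u.2 + d :=
  ⟨p.apply_getVert_of_apply_eq (fun x ↦ (x.1 : ℕ)) fst_le_of_adj h1 hd,
    p.apply_getVert_of_apply_eq (fun x ↦ (x.2 : ℕ)) snd_le_of_adj h2 hd⟩

def diag (hmn : m ≤ n) (i : Fin m) : Fin m × Fin n := (i, Fin.castLE hmn i)

@[simp]
lemma diag_fst (hmn : m ≤ n) (i : Fin m) : (diag hmn i).1 = i := rfl

@[simp]
lemma val_diag_snd (hmn : m ≤ n) (i : Fin m) : ((diag hmn i).2 : ℕ) = i := rfl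

lemma dist_diag_le (hmn : m ≤ n) {i l : Fin m} (hil : i ≤ l) :
    (strongGrid m n).dist (diag hmn i) (diag hmn l) ≤ (l : ℕ) - i := by
  let f : ℕ → Fin m × Fin n := fun s ↦ diag hmn ⟨min (i + s) l, by omega⟩
  have hil' : (i : ℕ) ≤ l := hil
  obtain ⟨p, hlen, -⟩ := exists_walk_of_chain f (l - i) fun s _ ↦
    eq_or_adj (by simp only [f, diag_fst]; omega) (by simp only [f, diag_fst]; omega)
      (by simp only [f, val_diag_snd]; omega) (by simp only [f, val_diag_snd]; omega)
  have h0 : f 0 = diag hmn i := congrArg (diag hmn) (Fin.ext (by simp only; omega))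
  have hL : f (l - i) = diag hmn l :=
    congrArg (diag hmn) (Fin.ext (by simp only; omega))
  exact (dist_le (p.copy h0 hL)).trans (by simpa using hlen)

lemma diag_notMem (hmn : m ≤ n) {S : Set (Fin m × Fin n)}
    (hS : IsMutualVisSet (strongGrid m n) S) {i j l : Fin m} (hij : i < j) (hjl : j < l)
    (hi : diag hmn i ∈ S) (hl : diag hmn l ∈ S) : diag hmn j ∉ S := by
  intro hj
  obtain ⟨p, -, hlen, hpS⟩ := hS _ hi _ hl fun h ↦ (hij.trans hjl).ne (congrArg Prod.fst h)
  have hdist := dist_diag_le hmn (hij.trans hjl).le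
  have hcheb := le_add_dist (diag hmn i) (diag hmn l)
  simp only [diag_fst, val_diag_snd] at hcheb
  have hij' : (i : ℕ) < j := hij
  have hjl' : (j : ℕ) < l := hjl
  have hplen : p.length = (l : ℕ) - i := by omega
  obtain ⟨h1, h2⟩ := getVert_of_length_eq p (by simp only [diag_fst]; omega)
    (by simp only [val_diag_snd]; omega)
    (d := j - i) (by omega)
  have hmid : p.getVert (j - i) = diag hmn j := by
    refine Prod.ext (Fin.ext ?_) (Fin.ext ?_) <;> simp only [diag_fst, val_diag_snd] at h1 h2 ⊢ <;>
      omega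
  rcases hpS _ (p.getVert_mem_support _) (hmid ▸ hj) with h | h <;> rw [hmid] at h
  exacts [hij.ne' (congrArg Prod.fst h), hjl.ne (congrArg Prod.fst h)]

lemma le_two_mul_of_coloring (hmn : m ≤ n) {k : ℕ} (c : Fin m × Fin n → Fin k)
    (hc : ∀ i, IsMutualVisSet (strongGrid m n) {x | c x = i}) : m ≤ 2 * k := by
  simpa using Fintype.card_le_two_mul_of_not_lt_lt (c ∘ diag hmn) fun i j l hij hjl h1 h2 ↦
    diag_notMem hmn (hc (c (diag hmn j))) hij hjl h1 h2.symm rfl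

lemma two_le_of_coloring (hm : 0 < m) (hn : 3 ≤ n) {k : ℕ} (c : Fin m × Fin n → Fin k)
    (hc : ∀ i, IsMutualVisSet (strongGrid m n) {x | c x = i}) : 2 ≤ k := by
  by_contra! hk
  let u : Fin m × Fin n := (⟨0, hm⟩, ⟨0, by omega⟩)
  let v : Fin m × Fin n := (⟨0, hm⟩, ⟨2, by omega⟩)
  have huniv : {x | c x = c u} = Set.univ :=
    Set.eq_univ_of_forall fun x ↦ Fin.ext (by have := (c x).isLt; have := (c u).isLt; omega)
  have hS : IsMutualVisSet (strongGrid m n) Set.univ := huniv ▸ hc (c u)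
  have hvis : (strongGrid m n).Visible Set.univ u v :=
    hS u trivial v trivial fun h ↦ by simpa [u, v] using congrArg (fun x ↦ (x.2 : ℕ)) h
  have hcheb : 2 ≤ 0 + (strongGrid m n).dist u v := (le_add_dist u v).2.2.1
  have := hvis.dist_le_one_of_univ
  omega

end strongGrid

theorem muChromatic_strongGrid_general (m n : ℕ) (hmn : m ≤ n) :
    (3 ≤ m → muChromatic (strongProd (pathGraph m) (pathGraph n)) = (m + 1) / 2) ∧
      (m = 2 → 3 ≤ n → muChromatic (strongProd (pathGraph m) (pathGraph n)) = 2) := by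
  unfold muChromatic
  constructor
  · intro hm
    refine IsLeast.csInf_eq ⟨strongGrid.exists_coloring (by omega) (by omega) (by omega), ?_⟩
    rintro k ⟨c, hc⟩
    have := strongGrid.le_two_mul_of_coloring hmn c hc
    omega
  · rintro rfl hn
    exact IsLeast.csInf_eq ⟨strongGrid.exists_coloring le_rfl le_rfl (by norm_num),
      fun k ⟨c, hc⟩ ↦ strongGrid.two_le_of_coloring two_pos hn c hc⟩

/-- For `2 ≤ m ≤ n`, `χ_μ(P_m ⊠ P_n) = ⌈m/2⌉` when `m ≥ 3`, and `χ_μ(P₂ ⊠ P_n) = 2`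
when `n ≥ 3`. -/
theorem muChromatic_strongGrid (m n : ℕ) (hm : 2 ≤ m) (hmn : m ≤ n) :
    (3 ≤ m → muChromatic (strongProd (pathGraph m) (pathGraph n)) = (m + 1) / 2) ∧
      (m = 2 → 3 ≤ n → muChromatic (strongProd (pathGraph m) (pathGraph n)) = 2) :=
  muChromatic_strongGrid_general m n hmn
end
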